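/- arXiv:2307.09376 — 8 statements merged into one kernel-verified Lean document; each statement's English description precedes it below -/
import Mathlib

section
/- If C is a prevariety over a finite alphabet A, then SF(C) is a prevariety closed under concatenation: every language of SF(C) is regular; SF(C) contains ∅ and A*; and SF(C) is closed under finite union, finite intersection, complement, concatenation, and the quotients L ↦ u⁻¹L and L ↦ Lu⁻¹ for every word u ∈ A*. -/
open Pointwise

namespace StarFreePaper

variable {A : Type}

/-- Languages over the alphabet `A`: sets of words, i.e. elements of the free monoid. -/
abbrev Lang (A : Type) : Type := Set (FreeMonoid A)

/-- Concatenation of languages. -/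
def Lcat (K L : Lang A) : Lang A := {w | ∃ u ∈ K, ∃ v ∈ L, w = u * v}

/-- Kleene star of a language. -/
def Lstar (K : Lang A) : Lang A :=
  {w | ∃ l : List (FreeMonoid A), (∀ u ∈ l, u ∈ K) ∧ w = l.prod}

/-- `K⁺`: nonempty products of words of `K`. -/
def Lplus (K : Lang A) : Lang A :=
  {w | ∃ l : List (FreeMonoid A), l ≠ [] ∧ (∀ u ∈ l, u ∈ K) ∧ w = l.prod}

/-- `K^d`: products of exactly `d` words of `K`. -/
def Lpow (K : Lang A) (d : ℕ) : Lang A :=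
  {w | ∃ l : List (FreeMonoid A), l.length = d ∧ (∀ u ∈ l, u ∈ K) ∧ w = l.prod}

/-- Left quotient `u⁻¹L`. -/
def LeftQuot (u : FreeMonoid A) (L : Lang A) : Lang A := {w | u * w ∈ L}

/-- Right quotient `Lu⁻¹`. -/
def RightQuot (u : FreeMonoid A) (L : Lang A) : Lang A := {w | w * u ∈ L}

/-- A bundled morphism from the free monoid over `A` into a finite monoid. -/
structure FinMonRec (A : Type) : Type 1 where
  M : Type
  [mon : Monoid M]
  [fin : Finite M]
  φ : FreeMonoid A →* M

attribute [instance] FinMonRec.mon FinMonRec.fin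

/-- A bundled morphism from the free monoid over `A` into a finite group. -/
structure FinGrpRec (A : Type) : Type 1 where
  G : Type
  [grp : Group G]
  [fin : Finite G]
  φ : FreeMonoid A →* G

attribute [instance] FinGrpRec.grp FinGrpRec.fin

/-- A morphism recognizes `L` when `L` is the preimage of some subset. -/
def Recognizes {M : Type} [Monoid M] (φ : FreeMonoid A →* M) (L : Lang A) : Prop :=
  ∃ F : Set M, L = φ ⁻¹' F

/-- A language is regular when it is recognized by a morphism into a finite monoid. -/
def IsRegular (L : Lang A) : Prop := ∃ r : FinMonRec A, Recognizes r.φ L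

/-- A language is a group language when it is recognized by a morphism into a finite group. -/
def IsGroupLang (L : Lang A) : Prop := ∃ r : FinGrpRec A, Recognizes r.φ L

/-- Prevariety: class of regular languages containing `∅` and `A*`, closed under finite
union, finite intersection, complement and left/right quotients by words. -/
def IsPrevariety (C : Set (Lang A)) : Prop :=
  (∀ L ∈ C, IsRegular L) ∧ (∅ : Lang A) ∈ C ∧ (Set.univ : Lang A) ∈ C ∧
    (∀ K ∈ C, ∀ L ∈ C, K ∪ L ∈ C) ∧ (∀ K ∈ C, ∀ L ∈ C, K ∩ L ∈ C) ∧
    (∀ L ∈ C, Lᶜ ∈ C) ∧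
    (∀ L ∈ C, ∀ u : FreeMonoid A, LeftQuot u L ∈ C) ∧
    (∀ L ∈ C, ∀ u : FreeMonoid A, RightQuot u L ∈ C)

/-- A group prevariety: a prevariety consisting of group languages. -/
def IsGroupPrevariety (G : Set (Lang A)) : Prop :=
  IsPrevariety G ∧ ∀ L ∈ G, IsGroupLang L

/-- Lattice of languages: contains `∅`, `A*`, closed under finite unions/intersections. -/
def IsLatticeClass (C : Set (Lang A)) : Prop :=
  (∅ : Lang A) ∈ C ∧ (Set.univ : Lang A) ∈ C ∧
    (∀ K ∈ C, ∀ L ∈ C, K ∪ L ∈ C) ∧ (∀ K ∈ C, ∀ L ∈ C, K ∩ L ∈ C)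

/-- Star-free closure of a class `C`: the least class containing `C` and the singletons
`{a}` for letters `a`, closed under union, complement and concatenation. -/
inductive SF (C : Set (Lang A)) : Lang A → Prop
  | base {L : Lang A} : L ∈ C → SF C L
  | letter (a : A) : SF C {FreeMonoid.of a}
  | union {K L : Lang A} : SF C K → SF C L → SF C (K ∪ L)
  | compl {L : Lang A} : SF C L → SF C Lᶜ
  | cat {K L : Lang A} : SF C K → SF C L → SF C (Lcat K L)

/-- Prefix code: `ε ∉ K` and no word of `K` is a strict prefix of another word of `K`. -/
def IsPrefixCode (K : Lang A) : Prop :=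
  (1 : FreeMonoid A) ∉ K ∧ ∀ u ∈ K, ∀ x : FreeMonoid A, x ≠ 1 → u * x ∉ K

/-- `K` has synchronization delay `d`. -/
def HasSyncDelay (K : Lang A) (d : ℕ) : Prop :=
  ∀ u v w : FreeMonoid A, u * v * w ∈ Lplus K → v ∈ Lpow K d → u * v ∈ Lplus K

/-- Bounded synchronization delay. -/
def BoundedSyncDelay (K : Lang A) : Prop := ∃ d, 1 ≤ d ∧ HasSyncDelay K d

/-- Unambiguous concatenation. -/
def Unambiguous (K L : Lang A) : Prop :=
  ∀ u u' v v' : FreeMonoid A,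
    u ∈ K → u' ∈ K → v ∈ L → v' ∈ L → u * v = u' * v' → u = u' ∧ v = v'

/-- `SD C`: least class containing `∅` and the singletons `{a}`, closed under
intersection with languages of `C`, disjoint union, unambiguous concatenation, and
Kleene star applied to prefix codes of bounded synchronization delay. -/
inductive SD (C : Set (Lang A)) : Lang A → Prop
  | empty : SD C ∅
  | letter (a : A) : SD C {FreeMonoid.of a}
  | inter {K : Lang A} (L : Lang A) : SD C K → L ∈ C → SD C (K ∩ L)
  | dunion {K L : Lang A} : SD C K → SD C L → K ∩ L = ∅ → SD C (K ∪ L)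
  | ucat {K L : Lang A} : SD C K → SD C L → Unambiguous K L → SD C (Lcat K L)
  | star {K : Lang A} : SD C K → IsPrefixCode K → BoundedSyncDelay K → SD C (Lstar K)

/-- `K` separates `L₁` from `L₂`. -/
def Separates (K L₁ L₂ : Lang A) : Prop := L₁ ⊆ K ∧ K ∩ L₂ = ∅

/-- `L₁` is `C`-separable from `L₂`. -/
def Separable (C : Set (Lang A)) (L₁ L₂ : Lang A) : Prop := ∃ K ∈ C, Separates K L₁ L₂

/-- A `C`-morphism: a surjective morphism whose recognized languages all belong to `C`. -/
def IsCMorphism {M : Type} [Monoid M] (C : Set (Lang A)) (φ : FreeMonoid A →* M) : Prop :=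
  Function.Surjective φ ∧ ∀ F : Set M, φ ⁻¹' F ∈ C

/-- `(s,t)` is a `C`-pair for `φ`. -/
def CPair {M : Type} [Monoid M] (C : Set (Lang A)) (φ : FreeMonoid A →* M) (s t : M) : Prop :=
  ¬ Separable C (φ ⁻¹' {s}) (φ ⁻¹' {t})

/-- The `C`-orbit of an idempotent `e` for `φ`. -/
def COrbit {M : Type} [Monoid M] (C : Set (Lang A)) (φ : FreeMonoid A →* M) (e : M) :
    Set M :=
  {r | ∃ s : M, CPair C φ e s ∧ r = e * s * e}

/-- The `G`-kernel of `φ`. -/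
def GKernel {M : Type} [Monoid M] (G : Set (Lang A)) (φ : FreeMonoid A →* M) : Set M :=
  {s | ¬ Separable G {(1 : FreeMonoid A)} (φ ⁻¹' {s})}

/-- The syntactic congruence of a language `L`. -/
def SynCon (L : Lang A) : Con (FreeMonoid A) where
  r u v := ∀ x y : FreeMonoid A, x * u * y ∈ L ↔ x * v * y ∈ L
  iseqv :=
    ⟨fun _ _ _ => Iff.rfl, fun h x y => (h x y).symm, fun h h' x y => (h x y).trans (h' x y)⟩
  mul' := by
    intro u v u' v' h h' x y
    have h1 := h' (x * u) y
    have h2 := h x (v' * y)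
    simp only [mul_assoc] at h1 h2 ⊢
    exact h1.trans h2

/-- The syntactic monoid of `L`. -/
abbrev SynMon (L : Lang A) : Type := (SynCon L).Quotient

/-- The syntactic morphism of `L`. -/
def SynMorphism (L : Lang A) : FreeMonoid A →* SynMon L := (SynCon L).mk'

/-- A subset of a monoid is aperiodic when each of its elements `r` satisfies
`r ^ (n+1) = r ^ n` for some `n ≥ 1`. -/
def IsAperiodicSet {M : Type} [Monoid M] (S : Set M) : Prop :=
  ∀ r ∈ S, ∃ n, 1 ≤ n ∧ r ^ (n + 1) = r ^ n

/-- `Ks` is a (finite) cover of `L`. -/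
def IsCoverOf (Ks : Set (Lang A)) (L : Lang A) : Prop := Ks.Finite ∧ L ⊆ ⋃₀ Ks

/-- `Ks` is separating for `Ls`. -/
def SeparatingFor (Ks Ls : Set (Lang A)) : Prop := ∀ K ∈ Ks, ∃ L ∈ Ls, K ∩ L = ∅

/-- The pair `(L₁, Ls)` is `C`-coverable. -/
def Coverable (C : Set (Lang A)) (L₁ : Lang A) (Ls : Set (Lang A)) : Prop :=
  ∃ Ks : Set (Lang A), IsCoverOf Ks L₁ ∧ (∀ K ∈ Ks, K ∈ C) ∧ SeparatingFor Ks Ls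

/-- Rating map into a commutative idempotent monoid `(R, +)`. -/
def IsRatingMap {R : Type} [AddCommMonoid R] (ρ : Lang A → R) : Prop :=
  ρ ∅ = 0 ∧ ∀ K L : Lang A, ρ (K ∪ L) = ρ K + ρ L

/-- Multiplicative rating map (into an idempotent semiring). -/
def IsMultRM {R : Type} [Semiring R] (ρ : Lang A → R) : Prop :=
  IsRatingMap ρ ∧ ρ {(1 : FreeMonoid A)} = 1 ∧ ∀ K L : Lang A, ρ (Lcat K L) = ρ K * ρ L

/-- Nice rating map: every value is attained on a finite sublanguage. -/
def IsNiceRM {R : Type} [AddCommMonoid R] (ρ : Lang A → R) : Prop :=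
  ∀ K : Lang A, ∃ F : Lang A, F.Finite ∧ F ⊆ K ∧ ρ K = ρ F

/-- Optimal `ρ`-imprint on `L` for `D` (intersection of imprints of all `D`-covers of `L`,
using the canonical order `r ≤ s ↔ r + s = s`). -/
def optImprint {R : Type} [AddCommMonoid R] (D : Set (Lang A)) (L : Lang A)
    (ρ : Lang A → R) : Set R :=
  {r | ∀ Ks : Set (Lang A), Ks.Finite → (∀ K ∈ Ks, K ∈ D) → L ⊆ ⋃₀ Ks →
    ∃ K ∈ Ks, r + ρ K = ρ K}

/-- `η`-pointed optimal `ρ`-imprint for `D`. -/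
def pointedOptImprint {N R : Type} [Monoid N] [AddCommMonoid R] (D : Set (Lang A))
    (η : FreeMonoid A →* N) (ρ : Lang A → R) : Set (N × R) :=
  {p | p.2 ∈ optImprint D (η ⁻¹' {p.1}) ρ}

/-- `S ⊆ N × R` is SF-saturated for `η` and `ρ`. -/
def SFSaturated {N R : Type} [Monoid N] [Semiring R] (η : FreeMonoid A →* N)
    (ρ : Lang A → R) (S : Set (N × R)) : Prop :=
  (∀ w : FreeMonoid A, (η w, ρ {w}) ∈ S) ∧
  (∀ t r, (t, r) ∈ S → ∀ q, q + r = r → (t, q) ∈ S) ∧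
  (∀ s q t r, (s, q) ∈ S → (t, r) ∈ S → (s * t, q * r) ∈ S) ∧
  (∀ e r, (e, r) ∈ S → e * e = e → ∀ n, 1 ≤ n → r ^ n * r ^ n = r ^ n →
    (e, r ^ n + r ^ (n + 1)) ∈ S)

/-- `L₀` is an optimal `G`-approximation for `τ` (w.r.t. the given canonical order `le`):
a language of `G` containing `ε` whose image is minimal among all such languages. -/
def OptApprox {Q : Type} (G : Set (Lang A)) (le : Q → Q → Prop) (τ : Lang A → Q)
    (L₀ : Lang A) : Prop :=
  L₀ ∈ G ∧ (1 : FreeMonoid A) ∈ L₀ ∧ ∀ L' ∈ G, (1 : FreeMonoid A) ∈ L' → le (τ L₀) (τ L')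

/-- The set `X_a = {s · ρ(a) · s' | s, s' ∈ S}`. -/
def muX {R : Type} [Semiring R] (ρ : Lang A → R) (S : Set R) (a : A) : Set R :=
  {x | ∃ s ∈ S, ∃ s' ∈ S, x = s * ρ {FreeMonoid.of a} * s'}

/-- `μ_*(a₁⋯aₙ) = X_{a₁} ⋯ X_{aₙ}` (pointwise product of sets; `μ_*(ε) = {1}`). -/
def muStar {R : Type} [Semiring R] (ρ : Lang A → R) (S : Set R) (w : FreeMonoid A) :
    Set R :=
  ((FreeMonoid.toList w).map (muX ρ S)).prod

/-- The nice multiplicative rating map `μ_{ρ,S}`. -/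
def mu {R : Type} [Semiring R] (ρ : Lang A → R) (S : Set R) (K : Lang A) : Set R :=
  ⋃ w ∈ K, muStar ρ S w

/-- `S ⊆ R` is SF-complete for `G` and `ρ`. -/
def SFComplete {R : Type} [Semiring R] (G : Set (Lang A)) (ρ : Lang A → R) (S : Set R) :
    Prop :=
  (∀ r ∈ S, ∀ q, q + r = r → q ∈ S) ∧
  (∀ q ∈ S, ∀ r ∈ S, q * r ∈ S) ∧
  (∀ L₀ : Lang A, OptApprox G (· ⊆ ·) (mu ρ S) L₀ → mu ρ S L₀ ⊆ S) ∧
  (∀ r ∈ S, ∀ n, 1 ≤ n → r ^ n * r ^ n = r ^ n → r ^ n + r ^ (n + 1) ∈ S)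

end StarFreePaper

open StarFreePaper

namespace SFAux

open StarFreePaper

set_option linter.unusedSectionVars false

/-! ### Basic free monoid facts -/

theorem fm_mul_eq_one {A : Type} {u v : FreeMonoid A} (h : u * v = 1) : u = 1 ∧ v = 1 :=
  List.append_eq_nil_iff.mp (congrArg FreeMonoid.toList h)

theorem fm_of_ne_one {A : Type} (a : A) : FreeMonoid.of a ≠ 1 := fun h =>
  List.cons_ne_nil _ _ (congrArg FreeMonoid.toList h)

theorem fm_ne_one_decomp {A : Type} (w : FreeMonoid A) (h : w ≠ 1) :
    ∃ b v, w = FreeMonoid.of b * v := by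
  match hl : FreeMonoid.toList w with
  | [] => exact absurd (show w = 1 from congrArg FreeMonoid.ofList hl) h
  | b :: r => exact ⟨b, FreeMonoid.ofList r, congrArg FreeMonoid.ofList hl⟩

/-! ### A finite monoid recognizing single letters -/

inductive L3 (A : Type) : Type
  | one : L3 A
  | letter (a : A) : L3 A
  | zero : L3 A

namespace L3

variable {A : Type}

def mul : L3 A → L3 A → L3 A
  | .one, y => y
  | x, .one => x
  | _, _ => .zero

instance : Monoid (L3 A) where
  mul := mul
  one := .one
  one_mul x := by cases x <;> rfl
  mul_one x := by cases x <;> rfl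
  mul_assoc x y z := by cases x <;> cases y <;> cases z <;> rfl

instance [Finite A] : Finite (L3 A) := by
  have : Fintype A := Fintype.ofFinite A
  have e : L3 A ≃ Option (Option A) :=
    { toFun := fun x => match x with
        | .one => none
        | .letter a => some (some a)
        | .zero => some none
      invFun := fun x => match x with
        | none => .one
        | some none => .zero
        | some (some a) => .letter a
      left_inv := fun x => by cases x <;> rfl
      right_inv := fun x => by rcases x with _ | (_ | a) <;> rfl }
  exact Finite.of_equiv _ e.symm

def φ : FreeMonoid A →* L3 A := FreeMonoid.lift L3.letter

theorem φ_eval (l : List A) :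
    φ (FreeMonoid.ofList l) = match l with
      | [] => L3.one
      | [b] => L3.letter b
      | _ :: _ :: _ => L3.zero := by
  match l with
  | [] => exact map_one φ
  | [b] => rfl
  | b :: c :: r =>
      rw [FreeMonoid.ofList_cons, map_mul, FreeMonoid.ofList_cons, map_mul]
      show L3.letter b * (L3.letter c * _) = L3.zero
      cases h : φ (FreeMonoid.ofList r) <;> rfl

theorem φ_eq_letter (a : A) (w : FreeMonoid A) :
    φ w = L3.letter a ↔ w = FreeMonoid.of a := by
  have hw : w = FreeMonoid.ofList (FreeMonoid.toList w) := rfl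
  rw [hw, φ_eval]
  have hof : FreeMonoid.toList (FreeMonoid.of a) = [a] := rfl
  match FreeMonoid.toList w with
  | [] =>
      constructor
      · rintro ⟨⟩
      · intro h
        have := congrArg FreeMonoid.toList h
        rw [hof] at this
        have h2 : ([] : List A) = [a] := this
        exact absurd h2 (by simp)
  | [b] =>
      constructor
      · rintro h; cases h; rfl
      · intro h
        have := congrArg FreeMonoid.toList h
        rw [hof] at this
        have h2 : ([b] : List A) = [a] := this
        have : b = a := by injection h2
        rw [this]
  | b :: c :: r =>
      constructor
      · rintro ⟨⟩
      · intro h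
        have := congrArg FreeMonoid.toList h
        rw [hof] at this
        have h2 : (b :: c :: r : List A) = [a] := this
        simp at h2

end L3

/-! ### The Schützenberger product -/

@[ext]
structure Schutz (M N : Type) : Type where
  left : M
  mid : Set (M × N)
  right : N

namespace Schutz

variable {M N : Type} [Monoid M] [Monoid N]

def smul (x y : Schutz M N) : Schutz M N :=
  ⟨x.left * y.left,
    ((fun p => (p.1, p.2 * y.right)) '' x.mid) ∪ ((fun p => (x.left * p.1, p.2)) '' y.mid),
    x.right * y.right⟩

instance : Monoid (Schutz M N) where
  one := ⟨1, ∅, 1⟩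
  mul := smul
  one_mul x := by show smul ⟨1, ∅, 1⟩ x = x; ext <;> simp [smul]
  mul_one x := by show smul x ⟨1, ∅, 1⟩ = x; ext <;> simp [smul]
  mul_assoc x y z := by
    show smul (smul x y) z = smul x (smul y z)
    refine Schutz.ext (mul_assoc _ _ _) ?_ (mul_assoc _ _ _)
    show ((fun p => (p.1, p.2 * z.right)) ''
        ((fun p => (p.1, p.2 * y.right)) '' x.mid ∪ (fun p => (x.left * p.1, p.2)) '' y.mid)
        ∪ (fun p => ((x.left * y.left) * p.1, p.2)) '' z.mid) =
      ((fun p => (p.1, p.2 * (y.right * z.right))) '' x.mid ∪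
        (fun p => (x.left * p.1, p.2)) ''
          ((fun p => (p.1, p.2 * z.right)) '' y.mid ∪ (fun p => (y.left * p.1, p.2)) '' z.mid))
    simp only [Set.image_union, Set.image_image, Set.union_assoc, mul_assoc]

theorem mul_def (x y : Schutz M N) : x * y = smul x y := rfl

instance [Finite M] [Finite N] : Finite (Schutz M N) := by
  have e : Schutz M N ≃ M × Set (M × N) × N :=
    { toFun := fun x => (x.left, x.mid, x.right)
      invFun := fun p => ⟨p.1, p.2.1, p.2.2⟩
      left_inv := fun _ => rfl
      right_inv := fun _ => rfl }
  exact Finite.of_equiv _ e.symm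

end Schutz

variable {A M N : Type} [Monoid M] [Monoid N]

/-- The set of `(φ u, ψ v)` over splittings `w = u * v`, empty for `w = 1`. -/
def splitSet (φ : FreeMonoid A →* M) (ψ : FreeMonoid A →* N) (w : FreeMonoid A) :
    Set (M × N) :=
  {p | ∃ u v : FreeMonoid A, u * v = w ∧ w ≠ 1 ∧ p = (φ u, ψ v)}

def schMap (φ : FreeMonoid A →* M) (ψ : FreeMonoid A →* N) :
    FreeMonoid A →* Schutz M N where
  toFun w := ⟨φ w, splitSet φ ψ w, ψ w⟩
  map_one' := by
    refine Schutz.ext (map_one φ) ?_ (map_one ψ)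
    show splitSet φ ψ 1 = ∅
    ext p
    simp [splitSet]
  map_mul' w w' := by
    rw [Schutz.mul_def]
    refine Schutz.ext (map_mul φ _ _) ?_ (map_mul ψ _ _)
    show splitSet φ ψ (w * w') =
      ((fun p => (p.1, p.2 * ψ w')) '' splitSet φ ψ w) ∪
        ((fun p => (φ w * p.1, p.2)) '' splitSet φ ψ w')
    ext p
    constructor
    · rintro ⟨u, v, huv, hne, rfl⟩
      have hl : FreeMonoid.toList u ++ FreeMonoid.toList v
          = FreeMonoid.toList w ++ FreeMonoid.toList w' := congrArg FreeMonoid.toList huv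
      rcases List.append_eq_append_iff.mp hl with ⟨x, hx1, hx2⟩ | ⟨c, hc1, hc2⟩
      · have hw : w = u * FreeMonoid.ofList x := congrArg FreeMonoid.ofList hx1
        have hv : v = FreeMonoid.ofList x * w' := congrArg FreeMonoid.ofList hx2
        by_cases hw1 : w = 1
        · obtain ⟨hu1, hx1'⟩ := fm_mul_eq_one (hw1 ▸ hw.symm)
          have hw'1 : w' ≠ 1 := fun h => hne (by rw [hw1, h, one_mul])
          refine Or.inr ⟨(φ (1 : FreeMonoid A), ψ v), ⟨1, v, ?_, hw'1, rfl⟩, ?_⟩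
          · rw [one_mul, hv, hx1', one_mul]
          · simp [hu1, hw1]
        · refine Or.inl ⟨(φ u, ψ (FreeMonoid.ofList x)), ⟨u, _, hw.symm, hw1, rfl⟩, ?_⟩
          simp [hv, map_mul]
      · have hu : u = w * FreeMonoid.ofList c := congrArg FreeMonoid.ofList hc1
        have hw' : w' = FreeMonoid.ofList c * v := congrArg FreeMonoid.ofList hc2
        by_cases hw'1 : w' = 1
        · obtain ⟨hc1', hv1⟩ := fm_mul_eq_one (hw'1 ▸ hw'.symm)
          have hwne : w ≠ 1 := fun h => hne (by rw [h, hw'1, one_mul])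
          refine Or.inl ⟨(φ u, ψ (1 : FreeMonoid A)), ⟨u, 1, ?_, hwne, rfl⟩, ?_⟩
          · rw [mul_one, hu, hc1', mul_one]
          · simp [hv1, hw'1]
        · refine Or.inr ⟨(φ (FreeMonoid.ofList c), ψ v), ⟨_, v, hw'.symm, hw'1, rfl⟩, ?_⟩
          simp [hu, map_mul]
    · rintro (⟨p₀, ⟨u, x, hux, hwne, rfl⟩, rfl⟩ | ⟨p₀, ⟨u, v, huv, hw'ne, rfl⟩, rfl⟩)
      · refine ⟨u, x * w', by rw [← mul_assoc, hux], ?_, by simp [map_mul]⟩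
        intro h
        exact hwne (fm_mul_eq_one h).1
      · refine ⟨w * u, v, by rw [mul_assoc, huv], ?_, by simp [map_mul]⟩
        intro h
        exact hw'ne (fm_mul_eq_one h).2

theorem schMap_mid (φ : FreeMonoid A →* M) (ψ : FreeMonoid A →* N) (w : FreeMonoid A) :
    (schMap φ ψ w).mid = splitSet φ ψ w := rfl

/-! ### Closure properties of regular languages -/

theorem reg_letter {A : Type} [Fintype A] (a : A) :
    StarFreePaper.IsRegular ({FreeMonoid.of a} : Lang A) := by
  refine ⟨⟨L3 A, L3.φ⟩, {L3.letter a}, ?_⟩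
  ext w
  simp only [Set.mem_singleton_iff, Set.mem_preimage]
  exact (L3.φ_eq_letter a w).symm

theorem reg_compl {A : Type} {L : Lang A} (h : StarFreePaper.IsRegular L) : StarFreePaper.IsRegular Lᶜ := by
  obtain ⟨r, F, hF⟩ := h
  exact ⟨r, Fᶜ, by rw [hF]; rfl⟩

theorem reg_union {A : Type} {K L : Lang A} (hK : StarFreePaper.IsRegular K) (hL : StarFreePaper.IsRegular L) :
    StarFreePaper.IsRegular (K ∪ L) := by
  obtain ⟨r1, F1, h1⟩ := hK
  obtain ⟨r2, F2, h2⟩ := hL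
  refine ⟨⟨r1.M × r2.M, r1.φ.prod r2.φ⟩, {p | p.1 ∈ F1 ∨ p.2 ∈ F2}, ?_⟩
  ext w
  simp [h1, h2, MonoidHom.prod_apply]

theorem reg_cat {A : Type} {K L : Lang A} (hK : StarFreePaper.IsRegular K) (hL : StarFreePaper.IsRegular L) :
    StarFreePaper.IsRegular (Lcat K L) := by
  obtain ⟨r1, F1, h1⟩ := hK
  obtain ⟨r2, F2, h2⟩ := hL
  refine ⟨⟨Schutz r1.M r2.M, schMap r1.φ r2.φ⟩,
    {x | (∃ p ∈ x.mid, p.1 ∈ F1 ∧ p.2 ∈ F2) ∨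
      (x.mid = ∅ ∧ (1 : r1.M) ∈ F1 ∧ (1 : r2.M) ∈ F2)}, ?_⟩
  ext w
  simp only [Set.mem_preimage, Set.mem_setOf_eq, schMap_mid]
  constructor
  · rintro ⟨u, hu, v, hv, rfl⟩
    by_cases h : u * v = 1
    · obtain ⟨hu1, hv1⟩ := fm_mul_eq_one h
      refine Or.inr ⟨?_, ?_, ?_⟩
      · ext p; simp [splitSet, h]
      · have := h1 ▸ hu; rw [hu1] at this; simpa [map_one] using this
      · have := h2 ▸ hv; rw [hv1] at this; simpa [map_one] using this
    · refine Or.inl ⟨(r1.φ u, r2.φ v), ⟨u, v, rfl, h, rfl⟩, ?_, ?_⟩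
      · rw [h1] at hu; exact hu
      · rw [h2] at hv; exact hv
  · rintro (⟨p, ⟨u, v, huv, hne, rfl⟩, hp1, hp2⟩ | ⟨hmid, hF1, hF2⟩)
    · exact ⟨u, by rw [h1]; exact hp1, v, by rw [h2]; exact hp2, huv.symm⟩
    · have hw1 : w = 1 := by
        by_contra hne
        have : (r1.φ w, r2.φ (1 : FreeMonoid A)) ∈ splitSet r1.φ r2.φ w :=
          ⟨w, 1, mul_one w, hne, rfl⟩
        rw [hmid] at this
        exact this
      refine ⟨1, ?_, 1, ?_, by rw [hw1, one_mul]⟩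
      · rw [h1]; simpa [map_one] using hF1
      · rw [h2]; simpa [map_one] using hF2

/-! ### SF closure properties -/

section SFClosure

open FreeMonoid

variable {A : Type} [Fintype A] {C : Set (Lang A)}

theorem sf_regular (hC : IsPrevariety C) {L : Lang A} (h : SF C L) :
    StarFreePaper.IsRegular L := by
  induction h with
  | base hL => exact hC.1 _ hL
  | letter a => exact reg_letter a
  | union _ _ ih1 ih2 => exact reg_union ih1 ih2
  | compl _ ih => exact reg_compl ih
  | cat _ _ ih1 ih2 => exact reg_cat ih1 ih2

theorem sf_inter {K L : Lang A} (hK : SF C K) (hL : SF C L) : SF C (K ∩ L) := by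
  have h := SF.compl (SF.union (SF.compl hK) (SF.compl hL))
  rwa [Set.compl_union, compl_compl, compl_compl] at h

theorem sf_letters_union (s : Finset A) :
    SF C ∅ → SF C (⋃ b ∈ s, ({FreeMonoid.of b} : Lang A)) := by
  classical
  intro h0
  induction s using Finset.induction_on with
  | empty => simpa using h0
  | insert _ _ hni ih =>
      rw [Finset.set_biUnion_insert]
      exact SF.union (SF.letter _) ih

theorem sf_epsilon (hC : IsPrevariety C) : SF C ({1} : Lang A) := by
  have h0 : SF C (∅ : Lang A) := SF.base hC.2.1
  have hU := sf_letters_union (C := C) Finset.univ h0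
  have key : ({1} : Lang A) =
      (Lcat (⋃ b ∈ (Finset.univ : Finset A), ({FreeMonoid.of b} : Lang A)) Set.univ)ᶜ := by
    ext w
    simp only [Set.mem_singleton_iff, Set.mem_compl_iff, Lcat, Set.mem_setOf_eq]
    constructor
    · rintro rfl ⟨u, hu, v, _, h⟩
      simp only [Set.mem_iUnion, Set.mem_singleton_iff] at hu
      obtain ⟨b, _, rfl⟩ := hu
      exact fm_of_ne_one b ((fm_mul_eq_one h.symm).1)
    · intro h
      by_contra hne
      obtain ⟨b, v, rfl⟩ := fm_ne_one_decomp w hne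
      exact h ⟨FreeMonoid.of b, by simp, v, Set.mem_univ v, rfl⟩
  rw [key]
  exact SF.compl (SF.cat hU (SF.base hC.2.2.1))

/-! ### Quotient identities -/

theorem leftQuot_union (u : FreeMonoid A) (K L : Lang A) :
    LeftQuot u (K ∪ L) = LeftQuot u K ∪ LeftQuot u L := rfl

theorem leftQuot_compl (u : FreeMonoid A) (K : Lang A) :
    LeftQuot u Kᶜ = (LeftQuot u K)ᶜ := rfl

theorem rightQuot_union (u : FreeMonoid A) (K L : Lang A) :
    RightQuot u (K ∪ L) = RightQuot u K ∪ RightQuot u L := rfl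

theorem rightQuot_compl (u : FreeMonoid A) (K : Lang A) :
    RightQuot u Kᶜ = (RightQuot u K)ᶜ := rfl

theorem leftQuot_letter_key (a b : A) (w : FreeMonoid A) :
    FreeMonoid.of a * w = FreeMonoid.of b ↔ a = b ∧ w = 1 := by
  constructor
  · intro h
    have h2 : a :: FreeMonoid.toList w = [b] := congrArg FreeMonoid.toList h
    injection h2 with h3 h4
    exact ⟨h3, congrArg FreeMonoid.ofList h4⟩
  · rintro ⟨rfl, rfl⟩; exact mul_one _

theorem leftQuot_letter_self (a : A) :
    LeftQuot (FreeMonoid.of a) ({FreeMonoid.of a} : Lang A) = ({1} : Lang A) := by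
  ext w; simp [LeftQuot, leftQuot_letter_key]

theorem leftQuot_letter_ne {a b : A} (hab : a ≠ b) :
    LeftQuot (FreeMonoid.of a) ({FreeMonoid.of b} : Lang A) = (∅ : Lang A) := by
  ext w; simp [LeftQuot, leftQuot_letter_key, hab]

theorem rightQuot_letter_key (a b : A) (w : FreeMonoid A) :
    w * FreeMonoid.of a = FreeMonoid.of b ↔ a = b ∧ w = 1 := by
  constructor
  · intro h
    have h2 : FreeMonoid.toList w ++ [a] = [b] := congrArg FreeMonoid.toList h
    rcases hl : FreeMonoid.toList w with _ | ⟨c, r⟩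
    · rw [hl] at h2
      injection h2 with h3 _
      exact ⟨h3.symm ▸ rfl, congrArg FreeMonoid.ofList hl⟩
    · rw [hl] at h2
      injection h2 with _ h4
      exact absurd h4 (by simp)
  · rintro ⟨rfl, rfl⟩; exact one_mul _

theorem rightQuot_letter_self (a : A) :
    RightQuot (FreeMonoid.of a) ({FreeMonoid.of a} : Lang A) = ({1} : Lang A) := by
  ext w; simp [RightQuot, rightQuot_letter_key]

theorem rightQuot_letter_ne {a b : A} (hab : a ≠ b) :
    RightQuot (FreeMonoid.of a) ({FreeMonoid.of b} : Lang A) = (∅ : Lang A) := by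
  ext w; simp [RightQuot, rightQuot_letter_key, hab]

theorem leftQuot_cat (a : A) (K L : Lang A) :
    LeftQuot (FreeMonoid.of a) (Lcat K L) =
      Lcat (LeftQuot (FreeMonoid.of a) K) L ∪
        {w | (1 : FreeMonoid A) ∈ K ∧ w ∈ LeftQuot (FreeMonoid.of a) L} := by
  ext w
  constructor
  · rintro ⟨u, hu, v, hv, heq⟩
    rcases hu' : FreeMonoid.toList u with _ | ⟨c, r⟩
    · have hu1 : u = 1 := congrArg FreeMonoid.ofList hu'
      rw [hu1] at hu heq
      rw [one_mul] at heq
      refine Or.inr ⟨hu, ?_⟩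
      show FreeMonoid.of a * w ∈ L
      rw [heq]; exact hv
    · have huc : u = FreeMonoid.of c * FreeMonoid.ofList r := congrArg FreeMonoid.ofList hu'
      have hlist : a :: FreeMonoid.toList w = c :: (r ++ FreeMonoid.toList v) := by
        have h5 := congrArg FreeMonoid.toList heq
        rw [FreeMonoid.toList_mul, FreeMonoid.toList_mul, FreeMonoid.toList_of, hu'] at h5
        exact h5
      injection hlist with hac hw
      have hwv : w = FreeMonoid.ofList r * v := congrArg FreeMonoid.ofList hw
      refine Or.inl ⟨FreeMonoid.ofList r, ?_, v, hv, hwv⟩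
      show FreeMonoid.of a * FreeMonoid.ofList r ∈ K
      rw [hac, ← huc]
      exact hu
  · rintro (⟨u, hu, v, hv, rfl⟩ | ⟨h1, hw⟩)
    · exact ⟨FreeMonoid.of a * u, hu, v, hv, (mul_assoc _ _ _).symm⟩
    · exact ⟨1, h1, FreeMonoid.of a * w, hw, (one_mul _).symm⟩

theorem rightQuot_cat (a : A) (K L : Lang A) :
    RightQuot (FreeMonoid.of a) (Lcat K L) =
      Lcat K (RightQuot (FreeMonoid.of a) L) ∪
        {w | (1 : FreeMonoid A) ∈ L ∧ w ∈ RightQuot (FreeMonoid.of a) K} := by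
  ext w
  constructor
  · rintro ⟨u, hu, v, hv, heq⟩
    rcases List.eq_nil_or_concat (FreeMonoid.toList v) with hv' | ⟨l, c, hv'⟩
    · have hv1 : v = 1 := congrArg FreeMonoid.ofList hv'
      rw [hv1] at hv heq
      rw [mul_one] at heq
      refine Or.inr ⟨hv, ?_⟩
      show w * FreeMonoid.of a ∈ K
      rw [heq]; exact hu
    · rw [List.concat_eq_append] at hv'
      have hvc : v = FreeMonoid.ofList l * FreeMonoid.of c := congrArg FreeMonoid.ofList hv'
      have hlist : FreeMonoid.toList w ++ [a] = (FreeMonoid.toList u ++ l) ++ [c] := by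
        have h5 := congrArg FreeMonoid.toList heq
        rw [FreeMonoid.toList_mul, FreeMonoid.toList_mul, FreeMonoid.toList_of, hv',
          ← List.append_assoc] at h5
        exact h5
      obtain ⟨hw, hac⟩ := List.append_inj' hlist rfl
      have hac' : a = c := by injection hac
      have hwu : w = u * FreeMonoid.ofList l := congrArg FreeMonoid.ofList hw
      refine Or.inl ⟨u, hu, FreeMonoid.ofList l, ?_, hwu⟩
      show FreeMonoid.ofList l * FreeMonoid.of a ∈ L
      rw [hac', ← hvc]
      exact hv
  · rintro (⟨u, hu, v, hv, rfl⟩ | ⟨h1, hw⟩)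
    · exact ⟨u, hu, v * FreeMonoid.of a, hv, mul_assoc _ _ _⟩
    · exact ⟨w * FreeMonoid.of a, hw, 1, h1, (mul_one _).symm⟩

/-! ### SF is closed under quotients -/

theorem sf_leftQuot_letter (hC : IsPrevariety C) (a : A) {L : Lang A} (h : SF C L) :
    SF C (LeftQuot (FreeMonoid.of a) L) := by
  induction h with
  | base hL => exact SF.base (hC.2.2.2.2.2.2.1 _ hL (FreeMonoid.of a))
  | letter b =>
      by_cases hab : a = b
      · subst hab; rw [leftQuot_letter_self]; exact sf_epsilon hC
      · rw [leftQuot_letter_ne hab]; exact SF.base hC.2.1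
  | union _ _ ih1 ih2 => rw [leftQuot_union]; exact SF.union ih1 ih2
  | compl _ ih => rw [leftQuot_compl]; exact SF.compl ih
  | @cat K L hK hL ihK ihL =>
      rw [leftQuot_cat]
      by_cases h1 : (1 : FreeMonoid A) ∈ K
      · have : {w | (1 : FreeMonoid A) ∈ K ∧ w ∈ LeftQuot (FreeMonoid.of a) L}
            = LeftQuot (FreeMonoid.of a) L := by ext w; simp [h1]
        rw [this]
        exact SF.union (SF.cat ihK hL) ihL
      · have : {w | (1 : FreeMonoid A) ∈ K ∧ w ∈ LeftQuot (FreeMonoid.of a) L}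
            = (∅ : Lang A) := by ext w; simp [h1]
        rw [this]
        exact SF.union (SF.cat ihK hL) (SF.base hC.2.1)

theorem sf_rightQuot_letter (hC : IsPrevariety C) (a : A) {L : Lang A} (h : SF C L) :
    SF C (RightQuot (FreeMonoid.of a) L) := by
  induction h with
  | base hL => exact SF.base (hC.2.2.2.2.2.2.2 _ hL (FreeMonoid.of a))
  | letter b =>
      by_cases hab : a = b
      · subst hab; rw [rightQuot_letter_self]; exact sf_epsilon hC
      · rw [rightQuot_letter_ne hab]; exact SF.base hC.2.1
  | union _ _ ih1 ih2 => rw [rightQuot_union]; exact SF.union ih1 ih2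
  | compl _ ih => rw [rightQuot_compl]; exact SF.compl ih
  | @cat K L hK hL ihK ihL =>
      rw [rightQuot_cat]
      by_cases h1 : (1 : FreeMonoid A) ∈ L
      · have : {w | (1 : FreeMonoid A) ∈ L ∧ w ∈ RightQuot (FreeMonoid.of a) K}
            = RightQuot (FreeMonoid.of a) K := by ext w; simp [h1]
        rw [this]
        exact SF.union (SF.cat hK ihL) ihK
      · have : {w | (1 : FreeMonoid A) ∈ L ∧ w ∈ RightQuot (FreeMonoid.of a) K}
            = (∅ : Lang A) := by ext w; simp [h1]
        rw [this]
        exact SF.union (SF.cat hK ihL) (SF.base hC.2.1)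

theorem leftQuot_one (L : Lang A) : LeftQuot 1 L = L := by
  ext w; simp [LeftQuot]

theorem rightQuot_one (L : Lang A) : RightQuot 1 L = L := by
  ext w; simp [RightQuot]

theorem leftQuot_cons (a : A) (l : List A) (L : Lang A) :
    LeftQuot (FreeMonoid.ofList (a :: l)) L
      = LeftQuot (FreeMonoid.ofList l) (LeftQuot (FreeMonoid.of a) L) := by
  ext w
  show FreeMonoid.ofList (a :: l) * w ∈ L ↔ FreeMonoid.of a * (FreeMonoid.ofList l * w) ∈ L
  rw [FreeMonoid.ofList_cons, mul_assoc]

theorem rightQuot_cons (a : A) (l : List A) (L : Lang A) :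
    RightQuot (FreeMonoid.ofList (a :: l)) L
      = RightQuot (FreeMonoid.of a) (RightQuot (FreeMonoid.ofList l) L) := by
  ext w
  show w * FreeMonoid.ofList (a :: l) ∈ L ↔ (w * FreeMonoid.of a) * FreeMonoid.ofList l ∈ L
  rw [FreeMonoid.ofList_cons, mul_assoc]

theorem sf_leftQuot (hC : IsPrevariety C) (u : FreeMonoid A) {L : Lang A} (h : SF C L) :
    SF C (LeftQuot u L) := by
  have : ∀ (l : List A) (L : Lang A), SF C L → SF C (LeftQuot (FreeMonoid.ofList l) L) := by
    intro l
    induction l with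
    | nil => intro L hL; rw [show FreeMonoid.ofList ([] : List A) = 1 from rfl, leftQuot_one]
             exact hL
    | cons a l ih =>
        intro L hL
        rw [leftQuot_cons]
        exact ih _ (sf_leftQuot_letter hC a hL)
  exact this (FreeMonoid.toList u) L h

theorem sf_rightQuot (hC : IsPrevariety C) (u : FreeMonoid A) {L : Lang A} (h : SF C L) :
    SF C (RightQuot u L) := by
  have : ∀ (l : List A) (L : Lang A), SF C L → SF C (RightQuot (FreeMonoid.ofList l) L) := by
    intro l
    induction l with
    | nil => intro L hL; rw [show FreeMonoid.ofList ([] : List A) = 1 from rfl, rightQuot_one]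
             exact hL
    | cons a l ih =>
        intro L hL
        rw [rightQuot_cons]
        exact sf_rightQuot_letter hC a (ih _ hL)
  exact this (FreeMonoid.toList u) L h

end SFClosure

end SFAux


/-- If `C` is a prevariety, then `SF(C)` is a prevariety closed
under concatenation. -/
theorem statement5 {A : Type} [Fintype A] (C : Set (Lang A)) (hC : IsPrevariety C) :
    IsPrevariety {L : Lang A | SF C L} ∧
      ∀ K L : Lang A, SF C K → SF C L → SF C (Lcat K L) := by
  refine ⟨⟨?_, ?_, ?_, ?_, ?_, ?_, ?_, ?_⟩, fun K L hK hL => SF.cat hK hL⟩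
  · exact fun L hL => SFAux.sf_regular hC hL
  · exact SF.base hC.2.1
  · exact SF.base hC.2.2.1
  · exact fun K hK L hL => SF.union hK hL
  · exact fun K hK L hL => SFAux.sf_inter hK hL
  · exact fun L hL => SF.compl hL
  · exact fun L hL u => SFAux.sf_leftQuot hC u hL
  · exact fun L hL u => SFAux.sf_rightQuot hC u hL
end

section
/- Let C be a prevariety over a finite alphabet A and let α : A* → M be an SF(C)-morphism. Then there exists a C-morphism η : A* → N such that for every word u ∈ A*: if η(u) is idempotent in N, then there is n ≥ 1 with α(u)^{n+1} = α(u)ⁿ (equivalently, (α(u))^{ω+1} = (α(u))^{ω}, where ω is an exponent such that s^{ω} is idempotent for every s ∈ M). -/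
open Pointwise

open StarFreePaper

/-! By induction on `SF C`, every language `L` of `SF(C)` admits a `C`-morphism `η` such that,
whenever `η u` is idempotent, membership of `x u^m y` in `L` stops depending on `m` for large `m`.
For `L ∈ C` the syntactic morphism of `L` works; a letter is handled by a length count, union and
complement are immediate, and for a concatenation `KL` every factorisation of `x u^m y` leaves
enough copies of `u` in one of the two factors to pump there. Combining such morphisms for the
finitely many fibres `α⁻¹(s)` and taking `x = y = ε` gives `α(u)^(n+1) = α(u)^n`. -/

namespace FreeMonoid

variable {α : Type}

theorem length_pow (u : FreeMonoid α) (n : ℕ) : (u ^ n).length = n * u.length := by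
  induction n with
  | zero => rw [pow_zero, zero_mul, length_one]
  | succ n ih => rw [pow_succ, length_mul, ih, Nat.succ_mul]

theorem mul_eq_mul_iff {a b c d : FreeMonoid α} :
    a * b = c * d ↔ (∃ t, c = a * t ∧ b = t * d) ∨ ∃ t, a = c * t ∧ d = t * b :=
  List.append_eq_append_iff

theorem mul_eq_pow_mul_cases {k l u y : FreeMonoid α} {m : ℕ} (h : k * l = u ^ m * y) :
    (∃ i j p q, i + j + 1 = m ∧ p * q = u ∧ k = u ^ i * p ∧ l = q * u ^ j * y) ∨
      ∃ y₁, y = y₁ * l ∧ k = u ^ m * y₁ := by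
  induction m generalizing k with
  | zero => exact Or.inr ⟨k, by simpa using h.symm, by simp⟩
  | succ m ih =>
    rw [pow_succ', mul_assoc] at h
    rcases mul_eq_mul_iff.1 h with ⟨t, hu, hl⟩ | ⟨t, hk, ht⟩
    · exact Or.inl ⟨0, m, k, t, by omega, hu.symm, by simp, by rw [hl, mul_assoc]⟩
    · rcases ih ht.symm with ⟨i, j, p, q, hij, hpq, rfl, hl⟩ | ⟨y₁, hy, rfl⟩
      · exact Or.inl ⟨i + 1, j, p, q, by omega, hpq, by rw [hk, pow_succ', mul_assoc], hl⟩
      · exact Or.inr ⟨y₁, hy, by rw [hk, pow_succ', mul_assoc]⟩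

theorem mul_eq_mul_pow_mul_cases {k l x u y : FreeMonoid α} {m : ℕ}
    (h : k * l = x * u ^ m * y) :
    (∃ x₂, x = k * x₂ ∧ l = x₂ * u ^ m * y) ∨
      (∃ i j p q, i + j + 1 = m ∧ p * q = u ∧ k = x * u ^ i * p ∧ l = q * u ^ j * y) ∨
      ∃ y₁, y = y₁ * l ∧ k = x * u ^ m * y₁ := by
  rw [mul_assoc] at h
  rcases mul_eq_mul_iff.1 h with ⟨t, hx, hl⟩ | ⟨t, rfl, ht⟩
  · exact Or.inl ⟨t, hx, by rw [hl, mul_assoc]⟩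
  · rcases mul_eq_pow_mul_cases ht.symm with ⟨i, j, p, q, hij, hpq, rfl, hl⟩ | ⟨y₁, hy, rfl⟩
    · exact Or.inr (Or.inl ⟨i, j, p, q, hij, hpq, by simp only [mul_assoc], hl⟩)
    · exact Or.inr (Or.inr ⟨y₁, hy, by simp only [mul_assoc]⟩)

end FreeMonoid

namespace StarFreePaper

variable {A : Type} {C : Set (Lang A)}

theorem IsPrevariety.isLatticeClass (hC : IsPrevariety C) : IsLatticeClass C :=
  ⟨hC.2.1, hC.2.2.1, hC.2.2.2.1, hC.2.2.2.2.1⟩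

namespace IsLatticeClass

theorem sUnion_mem (hC : IsLatticeClass C) {S : Set (Lang A)} (hS : S.Finite) (hSC : S ⊆ C) :
    ⋃₀ S ∈ C := by
  rw [← hS.coe_toFinset, ← Set.sSup_eq_sUnion, ← Finset.sup_id_eq_sSup]
  exact Finset.sup_mem C hC.1 hC.2.2.1 _ id fun _ hK => hSC (hS.mem_toFinset.1 hK)

theorem sInter_mem (hC : IsLatticeClass C) {S : Set (Lang A)} (hS : S.Finite) (hSC : S ⊆ C) :
    ⋂₀ S ∈ C := by
  rw [← hS.coe_toFinset, ← Set.sInf_eq_sInter, ← Finset.inf_id_eq_sInf]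
  exact Finset.inf_mem C hC.2.1 hC.2.2.2 _ id fun _ hK => hSC (hS.mem_toFinset.1 hK)

theorem isCMorphism_of_fibers (hC : IsLatticeClass C) {N : Type} [Monoid N] [Finite N]
    {φ : FreeMonoid A →* N} (hφ : Function.Surjective φ) (hfib : ∀ x, φ ⁻¹' {x} ∈ C) :
    IsCMorphism C φ := by
  refine ⟨hφ, fun F => ?_⟩
  rw [← Set.biUnion_preimage_singleton, ← Set.sUnion_image]
  exact hC.sUnion_mem (F.toFinite.image _) (Set.image_subset_iff.2 fun x _ => hfib x)

theorem isCMorphism_one (hC : IsLatticeClass C) : IsCMorphism C (1 : FreeMonoid A →* PUnit) :=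
  hC.isCMorphism_of_fibers (fun _ => ⟨1, rfl⟩) fun _ => by
    simpa [Set.preimage, Subsingleton.elim _ PUnit.unit] using hC.2.1

theorem exists_isCMorphism_isIdempotentElem_imp (hC : IsLatticeClass C) {r₁ r₂ : FinMonRec A}
    (h₁ : IsCMorphism C r₁.φ) (h₂ : IsCMorphism C r₂.φ) :
    ∃ r : FinMonRec A, IsCMorphism C r.φ ∧ ∀ u, IsIdempotentElem (r.φ u) →
      IsIdempotentElem (r₁.φ u) ∧ IsIdempotentElem (r₂.φ u) := by
  let φ := (r₁.φ.prod r₂.φ).mrangeRestrict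
  refine ⟨⟨_, φ⟩, hC.isCMorphism_of_fibers (r₁.φ.prod r₂.φ).mrangeRestrict_surjective
    fun x => ?_, fun u hu => Prod.ext_iff.1 (congrArg Subtype.val hu)⟩
  have hfib : φ ⁻¹' {x} = r₁.φ ⁻¹' {x.1.1} ∩ r₂.φ ⁻¹' {x.1.2} := by
    ext w
    simp [φ, Subtype.ext_iff, Prod.ext_iff]
  rw [hfib]
  exact hC.2.2.2 _ (h₁.2 _) _ (h₂.2 _)

end IsLatticeClass

theorem IsPrevariety.setOf_mul_mul_mem (hC : IsPrevariety C) {L : Lang A} (hL : L ∈ C)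
    (x y : FreeMonoid A) : {v | x * v * y ∈ L} ∈ C := by
  simpa only [LeftQuot, RightQuot, Set.mem_ofPred_eq, mul_assoc] using
    hC.2.2.2.2.2.2.1 _ (hC.2.2.2.2.2.2.2 L hL y) x

theorem synMon_finite {L : Lang A} (hL : IsRegular L) : Finite (SynMon L) := by
  obtain ⟨r, F, rfl⟩ := hL
  have hker : Con.ker r.φ ≤ SynCon (r.φ ⁻¹' F) := fun v w h x y => by
    simp only [Set.mem_preimage, map_mul, (Con.ker_rel r.φ).1 h]
  have : Finite (Con.ker r.φ).Quotient := Finite.of_injective _ (Con.kerLift_injective r.φ)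
  refine Finite.of_surjective (Con.map _ _ hker) fun q => ?_
  induction q using Con.induction_on with
  | H w => exact ⟨w, rfl⟩

theorem synMorphism_preimage_singleton (L : Lang A) (w : FreeMonoid A) :
    SynMorphism L ⁻¹' {SynMorphism L w} =
      ⋂₀ Set.range fun p : FreeMonoid A × FreeMonoid A =>
        {v | p.1 * v * p.2 ∈ L ↔ p.1 * w * p.2 ∈ L} := by
  ext v
  simp only [Set.mem_preimage, Set.mem_singleton_iff, Set.sInter_range, Set.mem_iInter,
    Set.mem_ofPred_eq, Prod.forall]
  exact (SynCon L).eq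

theorem isCMorphism_synMorphism (hC : IsPrevariety C) {L : Lang A} (hL : L ∈ C) :
    IsCMorphism C (SynMorphism L) := by
  obtain ⟨r, F, hF⟩ := hC.1 L hL
  have := synMon_finite (hC.1 L hL)
  refine hC.isLatticeClass.isCMorphism_of_fibers Con.mk'_surjective fun q => ?_
  obtain ⟨w, rfl⟩ := Con.mk'_surjective q
  rw [show (SynCon L).mk' w = SynMorphism L w from rfl, synMorphism_preimage_singleton]
  refine hC.isLatticeClass.sInter_mem ?_ ?_
  · -- the constraint at `(x, y)` only depends on `(r.φ x, r.φ y)`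
    refine (Set.finite_range fun p : r.M × r.M =>
      {v | p.1 * r.φ v * p.2 ∈ F ↔ p.1 * r.φ w * p.2 ∈ F}).subset ?_
    rintro _ ⟨⟨x, y⟩, rfl⟩
    exact ⟨(r.φ x, r.φ y), by simp [hF]⟩
  · rintro _ ⟨⟨x, y⟩, rfl⟩
    by_cases hw : x * w * y ∈ L
    · simpa [hw] using hC.setOf_mul_mul_mem hL x y
    · simpa [hw, Set.compl_ofPred] using hC.2.2.2.2.2.1 _ (hC.setOf_mul_mul_mem hL x y)

def PowStable (L : Lang A) (u : FreeMonoid A) (n : ℕ) : Prop :=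
  ∀ x y : FreeMonoid A, ∀ m ≥ n, (x * u ^ m * y ∈ L ↔ x * u ^ n * y ∈ L)

namespace PowStable

variable {K L : Lang A} {u : FreeMonoid A} {n : ℕ}

theorem mem_congr (h : PowStable L u n) (x y : FreeMonoid A) {m m' : ℕ} (hm : n ≤ m)
    (hm' : n ≤ m') : x * u ^ m * y ∈ L ↔ x * u ^ m' * y ∈ L :=
  (h x y m hm).trans (h x y m' hm').symm

theorem mono (h : PowStable L u n) {n' : ℕ} (hn : n ≤ n') : PowStable L u n' :=
  fun x y _ hm => h.mem_congr x y (hn.trans hm) hn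

theorem eventually (h : PowStable L u n) : ∀ᶠ n' in Filter.atTop, PowStable L u n' :=
  Filter.eventually_atTop.2 ⟨n, fun _ => h.mono⟩

theorem union (hK : PowStable K u n) (hL : PowStable L u n) : PowStable (K ∪ L) u n :=
  fun x y m hm => or_congr (hK x y m hm) (hL x y m hm)

theorem compl (h : PowStable L u n) : PowStable Lᶜ u n :=
  fun x y m hm => not_congr (h x y m hm)

theorem singleton (w u : FreeMonoid A) : PowStable {w} u (w.length + 1) := by
  intro x y m hm
  by_cases hu : u = 1
  · simp [hu]
  have long : ∀ k ≥ w.length + 1, x * u ^ k * y ≠ w := fun k hk he => by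
    have hlen := congrArg FreeMonoid.length he
    have hu' : 1 ≤ u.length := Nat.one_le_iff_ne_zero.2 (mt FreeMonoid.length_eq_zero.1 hu)
    simp only [FreeMonoid.length_mul, FreeMonoid.length_pow] at hlen
    nlinarith
  simp [long m hm, long _ le_rfl]

theorem of_isIdempotentElem_synMorphism (hu : IsIdempotentElem (SynMorphism L u)) :
    PowStable L u 1 := fun x y m hm => by
  have hpow : SynMorphism L (u ^ m) = SynMorphism L (u ^ 1) := by
    rw [map_pow, map_pow, hu.pow_eq (by omega), pow_one]
  exact (SynCon L).eq.1 hpow x y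

theorem cat {nK nL : ℕ} (hK : PowStable K u nK) (hL : PowStable L u nL) :
    PowStable (Lcat K L) u (nK + nL + 1) := by
  suffices shift : ∀ x y : FreeMonoid A, ∀ m m', nK + nL + 1 ≤ m → nK + nL + 1 ≤ m' →
      x * u ^ m * y ∈ Lcat K L → x * u ^ m' * y ∈ Lcat K L from
    fun x y m hm => ⟨shift x y m _ hm le_rfl, shift x y _ m le_rfl hm⟩
  rintro x y m m' hm hm' ⟨k, hk, l, hl, hkl⟩
  rcases FreeMonoid.mul_eq_mul_pow_mul_cases hkl.symm with
    ⟨x₂, rfl, rfl⟩ | ⟨i, j, p, q, rfl, hpq, rfl, rfl⟩ | ⟨y₁, rfl, rfl⟩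
  · exact ⟨k, hk, x₂ * u ^ m' * y, (hL.mem_congr x₂ y (by omega) (by omega)).1 hl,
      by simp only [mul_assoc]⟩
  · -- one of the two factors keeps at least its threshold number of copies of `u`
    obtain ⟨i', j', hij', hi', hj'⟩ : ∃ i' j', i' + j' + 1 = m' ∧ (i' = i ∨ nK ≤ i ∧ nK ≤ i') ∧
        (j' = j ∨ nL ≤ j ∧ nL ≤ j') := by
      by_cases hi : i < nK
      · exact ⟨i, m' - 1 - i, by omega, Or.inl rfl, Or.inr ⟨by omega, by omega⟩⟩
      by_cases hj : j < nL
      · exact ⟨m' - 1 - j, j, by omega, Or.inr ⟨by omega, by omega⟩, Or.inl rfl⟩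
      exact ⟨nK, m' - 1 - nK, by omega, Or.inr ⟨by omega, le_rfl⟩, Or.inr ⟨by omega, by omega⟩⟩
    refine ⟨x * u ^ i' * p, ?_, q * u ^ j' * y, ?_, ?_⟩
    · rcases hi' with rfl | ⟨h₁, h₂⟩
      exacts [hk, (hK.mem_congr x p h₁ h₂).1 hk]
    · rcases hj' with rfl | ⟨h₁, h₂⟩
      exacts [hl, (hL.mem_congr q y h₁ h₂).1 hl]
    · rw [← hij', show i' + j' + 1 = i' + 1 + j' by omega, pow_add, pow_succ, ← hpq]
      simp only [mul_assoc]
  · exact ⟨x * u ^ m' * y₁, (hK.mem_congr x y₁ (by omega) (by omega)).1 hk, l, hl,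
      by simp only [mul_assoc]⟩

end PowStable

def StableOnIdempotents {N : Type} [Monoid N] (φ : FreeMonoid A →* N) (L : Lang A) : Prop :=
  ∀ u, IsIdempotentElem (φ u) → ∀ᶠ n in Filter.atTop, PowStable L u n

theorem SF.exists_isCMorphism_stableOnIdempotents (hC : IsPrevariety C) {L : Lang A}
    (hL : SF C L) : ∃ r : FinMonRec A, IsCMorphism C r.φ ∧ StableOnIdempotents r.φ L := by
  induction hL with
  | @base L hL =>
    have := synMon_finite (hC.1 L hL)
    exact ⟨⟨_, SynMorphism L⟩, isCMorphism_synMorphism hC hL,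
      fun u hu => (PowStable.of_isIdempotentElem_synMorphism hu).eventually⟩
  | letter a =>
    exact ⟨⟨PUnit, 1⟩, hC.isLatticeClass.isCMorphism_one,
      fun u _ => (PowStable.singleton _ u).eventually⟩
  | union _ _ ihK ihL =>
    obtain ⟨r₁, h₁, hK⟩ := ihK
    obtain ⟨r₂, h₂, hL⟩ := ihL
    obtain ⟨r, hr, hidem⟩ := hC.isLatticeClass.exists_isCMorphism_isIdempotentElem_imp h₁ h₂
    exact ⟨r, hr, fun u hu => ((hK u (hidem u hu).1).and (hL u (hidem u hu).2)).mono
      fun _ h => h.1.union h.2⟩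
  | compl _ ih =>
    obtain ⟨r, hr, hL⟩ := ih
    exact ⟨r, hr, fun u hu => (hL u hu).mono fun _ h => h.compl⟩
  | cat _ _ ihK ihL =>
    obtain ⟨r₁, h₁, hK⟩ := ihK
    obtain ⟨r₂, h₂, hL⟩ := ihL
    obtain ⟨r, hr, hidem⟩ := hC.isLatticeClass.exists_isCMorphism_isIdempotentElem_imp h₁ h₂
    refine ⟨r, hr, fun u hu => ?_⟩
    obtain ⟨nK, hnK⟩ := (hK u (hidem u hu).1).exists
    obtain ⟨nL, hnL⟩ := (hL u (hidem u hu).2).exists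
    exact (hnK.cat hnL).eventually

theorem exists_isCMorphism_forall_stableOnIdempotents (hC : IsLatticeClass C) {ι : Type}
    [Finite ι] (Ls : ι → Lang A)
    (h : ∀ i, ∃ r : FinMonRec A, IsCMorphism C r.φ ∧ StableOnIdempotents r.φ (Ls i)) :
    ∃ r : FinMonRec A, IsCMorphism C r.φ ∧ ∀ i, StableOnIdempotents r.φ (Ls i) := by
  classical
  have := Fintype.ofFinite ι
  suffices ∀ s : Finset ι, ∃ r : FinMonRec A, IsCMorphism C r.φ ∧
      ∀ i ∈ s, StableOnIdempotents r.φ (Ls i) by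
    obtain ⟨r, hr, hs⟩ := this Finset.univ
    exact ⟨r, hr, fun i => hs i (Finset.mem_univ i)⟩
  intro s
  induction s using Finset.induction_on with
  | empty => exact ⟨⟨PUnit, 1⟩, hC.isCMorphism_one, by simp⟩
  | insert i s _ ih =>
    obtain ⟨r₁, h₁, hi⟩ := h i
    obtain ⟨r₂, h₂, hs⟩ := ih
    obtain ⟨r, hr, hidem⟩ := hC.exists_isCMorphism_isIdempotentElem_imp h₁ h₂
    refine ⟨r, hr, fun j hj u hu => ?_⟩
    rcases Finset.mem_insert.1 hj with rfl | hj
    exacts [hi u (hidem u hu).1, hs j hj u (hidem u hu).2]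

end StarFreePaper

theorem statement6_general {A : Type} (C : Set (Lang A)) (hC : IsPrevariety C)
    {M : Type} [Monoid M] [Finite M] (α : FreeMonoid A →* M)
    (hα : IsCMorphism {L : Lang A | SF C L} α) :
    ∃ r : FinMonRec A, IsCMorphism C r.φ ∧
      ∀ u : FreeMonoid A, r.φ u * r.φ u = r.φ u →
        ∃ n, 1 ≤ n ∧ α u ^ (n + 1) = α u ^ n := by
  obtain ⟨r, hr, hstable⟩ := exists_isCMorphism_forall_stableOnIdempotents hC.isLatticeClass
    (fun s : M => α ⁻¹' {s})
    fun s => (hα.2 {s}).exists_isCMorphism_stableOnIdempotents hC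
  refine ⟨r, hr, fun u hu => ?_⟩
  obtain ⟨n, hfib, hn⟩ :=
    ((Filter.eventually_all.2 fun s => hstable s u hu).and (Filter.eventually_ge_atTop 1)).exists
  -- `u ^ (n + 1)` lies in the fibre of `α (u ^ n)` because `u ^ n` does
  have := (hfib (α u ^ n) 1 1 (n + 1) n.le_succ).2
  exact ⟨n, hn, by simpa using this⟩

/-- If `α` is an `SF(C)`-morphism, there is a `C`-morphism `η` such that
whenever `η(u)` is idempotent, `α(u)^(n+1) = α(u)^n` for some `n ≥ 1`. -/
theorem statement6 {A : Type} [Fintype A] (C : Set (Lang A)) (hC : IsPrevariety C)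
    {M : Type} [Monoid M] [Finite M] (α : FreeMonoid A →* M)
    (hα : IsCMorphism {L : Lang A | SF C L} α) :
    ∃ r : FinMonRec A, IsCMorphism C r.φ ∧
      ∀ u : FreeMonoid A, r.φ u * r.φ u = r.φ u →
        ∃ n, 1 ≤ n ∧ α u ^ (n + 1) = α u ^ n :=
  statement6_general C hC α hα
end

section
/- Let C be a finite prevariety over a finite alphabet A and let α : A* → M and η : A* → N be two C-morphisms. If every language of C is recognized by α, then there exists a monoid morphism γ : M → N such that η = γ ∘ α. -/
open Pointwise

open StarFreePaper

/-- If `C` is a finite prevariety and `α`, `η` are `C`-morphisms with `α`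
recognizing all languages of `C`, then `η` factors through `α`. -/
theorem statement9 {A : Type} [Fintype A] (C : Set (Lang A)) (hC : IsPrevariety C)
    (hCfin : C.Finite) {M N : Type} [Monoid M] [Finite M] [Monoid N] [Finite N]
    (α : FreeMonoid A →* M) (η : FreeMonoid A →* N)
    (hα : IsCMorphism C α) (hη : IsCMorphism C η)
    (hrec : ∀ L ∈ C, Recognizes α L) :
    ∃ γ : M →* N, ∀ w : FreeMonoid A, η w = γ (α w) := by
  have key : ∀ u v : FreeMonoid A, α u = α v → η u = η v := by
    intro u v huv
    have hmem : (η ⁻¹' {η u}) ∈ C := hη.2 {η u}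
    obtain ⟨F, hF⟩ := hrec _ hmem
    have hu : u ∈ α ⁻¹' F := by rw [← hF]; exact rfl
    have hv : v ∈ α ⁻¹' F := by
      simp only [Set.mem_preimage] at hu ⊢; rw [huv] at hu; exact hu
    rw [← hF] at hv
    exact hv.symm
  obtain ⟨hsurj, -⟩ := hα
  refine ⟨{ toFun := fun m => η (Function.surjInv hsurj m), map_one' := ?_, map_mul' := ?_ }, ?_⟩
  · have : α (Function.surjInv hsurj 1) = α 1 := by
      rw [Function.surjInv_eq hsurj, map_one]
    rw [key _ _ this, map_one]
  · intro a b
    have : α (Function.surjInv hsurj (a * b))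
        = α (Function.surjInv hsurj a * Function.surjInv hsurj b) := by
      rw [Function.surjInv_eq hsurj, map_mul, Function.surjInv_eq hsurj,
        Function.surjInv_eq hsurj]
    rw [key _ _ this, map_mul]
  · intro w
    have : α w = α (Function.surjInv hsurj (α w)) := (Function.surjInv_eq hsurj _).symm
    exact key _ _ this
end

section
/- Let C be a prevariety over a finite alphabet A and let α : A* → M be a monoid morphism into a finite monoid. Then: (1) for every C-morphism η : A* → N and every C-pair (s,t) for α, there exist words u,v ∈ A* with η(u) = η(v), α(u) = s and α(v) = t; (2) there exists a C-morphism η : A* → N such that for all u,v ∈ A*, if η(u) = η(v) then (α(u),α(v)) is a C-pair for α. -/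
open Pointwise

open StarFreePaper

section Aux12

variable {A : Type}

private lemma aux12_iInter {C : Set (Lang A)} (huniv : (Set.univ : Lang A) ∈ C)
    (hi : ∀ K ∈ C, ∀ L ∈ C, K ∩ L ∈ C) {ι : Type} [Finite ι]
    (f : ι → Lang A) (hf : ∀ i, f i ∈ C) : (⋂ i, f i) ∈ C := by
  classical
  haveI : Fintype ι := Fintype.ofFinite ι
  have key : ∀ s : Finset ι, (⋂ i ∈ s, f i) ∈ C := by
    intro s
    induction s using Finset.induction with
    | empty => simpa using huniv
    | @insert a s ha ih =>
      rw [Finset.set_biInter_insert]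
      exact hi _ (hf _) _ ih
  have h := key Finset.univ
  simpa using h

private lemma aux12_iUnion {C : Set (Lang A)} (hempty : (∅ : Lang A) ∈ C)
    (hu : ∀ K ∈ C, ∀ L ∈ C, K ∪ L ∈ C) {ι : Type} [Finite ι]
    (f : ι → Lang A) (hf : ∀ i, f i ∈ C) : (⋃ i, f i) ∈ C := by
  classical
  haveI : Fintype ι := Fintype.ofFinite ι
  have key : ∀ s : Finset ι, (⋃ i ∈ s, f i) ∈ C := by
    intro s
    induction s using Finset.induction with
    | empty => simpa using hempty
    | @insert a s ha ih =>
      rw [Finset.set_biUnion_insert]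
      exact hu _ (hf _) _ ih
  have h := key Finset.univ
  simpa using h

private lemma aux12_synCon_of_eq {L : Lang A} {u v : FreeMonoid A}
    (h : SynMorphism L u = SynMorphism L v) : SynCon L u v :=
  (Con.eq _).mp h

private lemma aux12_mem_iff_of_synCon {L : Lang A} {u v : FreeMonoid A}
    (h : SynCon L u v) : u ∈ L ↔ v ∈ L := by
  have := h 1 1
  simpa using this

private lemma aux12_synMon_finite {L : Lang A} (hL : StarFreePaper.IsRegular L) : Finite (SynMon L) := by
  classical
  obtain ⟨r, F, hF⟩ := hL
  have hker : ∀ u v : FreeMonoid A, r.φ u = r.φ v → SynCon L u v := by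
    intro u v h x y
    rw [hF]
    simp [Set.mem_preimage, map_mul, h]
  let f : r.M → SynMon L := fun m =>
    if h : ∃ w, r.φ w = m then (SynMorphism L) h.choose else 1
  have hf : Function.Surjective f := by
    intro q
    obtain ⟨u, rfl⟩ := Con.mk'_surjective (c := SynCon L) q
    refine ⟨r.φ u, ?_⟩
    have hex : ∃ w, r.φ w = r.φ u := ⟨u, rfl⟩
    simp only [f, dif_pos hex]
    exact (Con.eq _).mpr (hker _ _ hex.choose_spec)
  exact Finite.of_surjective f hf

private lemma aux12_syn_singleton_mem {C : Set (Lang A)} (hC : IsPrevariety C) {L : Lang A}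
    (hL : L ∈ C) (n : SynMon L) : SynMorphism L ⁻¹' {n} ∈ C := by
  classical
  obtain ⟨hreg, h0, huniv, hun, hin, hco, hlq, hrq⟩ := hC
  obtain ⟨r, F, hF⟩ := hreg L hL
  obtain ⟨u, rfl⟩ := Con.mk'_surjective (c := SynCon L) n
  -- representatives for elements of r.M
  let rep : r.M → FreeMonoid A := fun m => if h : ∃ w, r.φ w = m then h.choose else 1
  have hrep : ∀ x : FreeMonoid A, r.φ (rep (r.φ x)) = r.φ x := by
    intro x
    have hex : ∃ w, r.φ w = r.φ x := ⟨x, rfl⟩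
    simp only [rep, dif_pos hex]
    exact hex.choose_spec
  have hLiff : ∀ x x' y y' w : FreeMonoid A, r.φ x = r.φ x' → r.φ y = r.φ y' →
      (x * w * y ∈ L ↔ x' * w * y' ∈ L) := by
    intro x x' y y' w hx hy
    rw [hF]
    simp [Set.mem_preimage, map_mul, hx, hy]
  let Q : r.M × r.M → Lang A := fun p => LeftQuot (rep p.1) (RightQuot (rep p.2) L)
  have hQmem : ∀ p v, v ∈ Q p ↔ rep p.1 * v * rep p.2 ∈ L := fun p v => Iff.rfl
  let T : r.M × r.M → Lang A := fun p =>
    if rep p.1 * u * rep p.2 ∈ L then Q p else (Q p)ᶜ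
  have hQC : ∀ p, Q p ∈ C := fun p => hlq _ (hrq _ hL _) _
  have hTC : ∀ p, T p ∈ C := by
    intro p
    by_cases h : rep p.1 * u * rep p.2 ∈ L
    · simpa [T, if_pos h] using hQC p
    · simpa [T, if_neg h] using hco _ (hQC p)
  have heq : SynMorphism L ⁻¹' {(SynCon L).mk' u} = ⋂ p, T p := by
    ext v
    simp only [Set.mem_preimage, Set.mem_singleton_iff, Set.mem_iInter]
    constructor
    · intro hv p
      have hcon : SynCon L u v := (SynCon L).symm (aux12_synCon_of_eq hv)
      by_cases h : rep p.1 * u * rep p.2 ∈ L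
      · have : rep p.1 * v * rep p.2 ∈ L := (hcon (rep p.1) (rep p.2)).mp h
        simpa [T, hQmem, if_pos h] using this
      · have : rep p.1 * v * rep p.2 ∉ L := fun hv' => h ((hcon (rep p.1) (rep p.2)).mpr hv')
        simpa [T, hQmem, if_neg h] using this
    · intro hv
      have key : SynCon L u v := by
        intro x y
        have h1 : x * u * y ∈ L ↔ rep (r.φ x) * u * rep (r.φ y) ∈ L :=
          hLiff _ _ _ _ _ (hrep x).symm (hrep y).symm
        have h2 : x * v * y ∈ L ↔ rep (r.φ x) * v * rep (r.φ y) ∈ L :=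
          hLiff _ _ _ _ _ (hrep x).symm (hrep y).symm
        have hvp := hv (r.φ x, r.φ y)
        by_cases h : rep (r.φ x) * u * rep (r.φ y) ∈ L
        · have hvL : rep (r.φ x) * v * rep (r.φ y) ∈ L := by
            simpa [T, hQmem, if_pos h] using hvp
          rw [h1, h2]
          exact iff_of_true h hvL
        · have hvL : rep (r.φ x) * v * rep (r.φ y) ∉ L := by
            simpa [T, hQmem, if_neg h] using hvp
          rw [h1, h2]
          exact iff_of_false h hvL
      exact (Con.eq _).mpr ((SynCon L).symm key)
  rw [show SynMorphism L ⁻¹' {(SynCon L).mk' u} = ⋂ p, T p from heq]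
  haveI : Finite r.M := r.fin
  exact aux12_iInter huniv hin T hTC

end Aux12

/-- For a prevariety `C` and a morphism `α` into a finite monoid:
(1) for every `C`-morphism `η` and every `C`-pair `(s,t)` for `α`, there are words `u,v`
with `η u = η v`, `α u = s`, `α v = t`; (2) there is a `C`-morphism `η` such that
`η u = η v` implies that `(α u, α v)` is a `C`-pair for `α`. -/
theorem statement12 {A : Type} [Fintype A] (C : Set (Lang A)) (hC : IsPrevariety C)
    {M : Type} [Monoid M] [Finite M] (α : FreeMonoid A →* M) :
    (∀ (N : Type) [Monoid N] [Finite N] (η : FreeMonoid A →* N), IsCMorphism C η →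
        ∀ s t : M, CPair C α s t →
          ∃ u v : FreeMonoid A, η u = η v ∧ α u = s ∧ α v = t) ∧
      ∃ r : FinMonRec A, IsCMorphism C r.φ ∧
        ∀ u v : FreeMonoid A, r.φ u = r.φ v → CPair C α (α u) (α v) := by
  classical
  constructor
  · -- Part (1)
    intro N _ _ η hη s t hst
    by_contra hcon
    push_neg at hcon
    apply hst
    refine ⟨η ⁻¹' (η '' (α ⁻¹' {s})), hη.2 _, ?_, ?_⟩
    · intro w hw
      exact Set.mem_preimage.mpr ⟨w, hw, rfl⟩
    · ext v
      simp only [Set.mem_inter_iff, Set.mem_preimage, Set.mem_singleton_iff,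
        Set.mem_empty_iff_false, iff_false, not_and]
      rintro ⟨u, hu, huv⟩ hvt
      exact hcon u v huv hu hvt
  · -- Part (2)
    -- choose separators for non-C-pairs
    have hsep : ∀ p : M × M, ∃ K : Lang A, K ∈ C ∧
        (¬ CPair C α p.1 p.2 → Separates K (α ⁻¹' {p.1}) (α ⁻¹' {p.2})) := by
      intro p
      by_cases h : CPair C α p.1 p.2
      · exact ⟨Set.univ, hC.2.2.1, fun h' => absurd h h'⟩
      · obtain ⟨K, hKC, hKsep⟩ := of_not_not h
        exact ⟨K, hKC, fun _ => hKsep⟩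
    choose K hKC hKsep using hsep
    -- each K p is in C, hence regular, hence its syntactic monoid is finite
    haveI : ∀ p : M × M, Finite (SynMon (K p)) := fun p =>
      aux12_synMon_finite (hC.1 _ (hKC p))
    let N₀ : Type := ∀ p : M × M, SynMon (K p)
    let η₀ : FreeMonoid A →* N₀ := Pi.monoidHom (fun p => SynMorphism (K p))
    let η : FreeMonoid A →* MonoidHom.mrange η₀ := MonoidHom.mrangeRestrict η₀
    have hηsurj : Function.Surjective η := η₀.mrangeRestrict_surjective
    have hsingle : ∀ n : (MonoidHom.mrange η₀), η ⁻¹' {n} ∈ C := by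
      intro n
      have heq : η ⁻¹' {n} = ⋂ p : M × M, SynMorphism (K p) ⁻¹' {(n : N₀) p} := by
        ext w
        simp only [Set.mem_preimage, Set.mem_singleton_iff, Set.mem_iInter]
        constructor
        · intro h p
          have : (η w : N₀) = (n : N₀) := by rw [h]
          exact congrFun this p
        · intro h
          apply Subtype.ext
          funext p
          exact h p
      rw [heq]
      exact aux12_iInter hC.2.2.1 hC.2.2.2.2.1 _
        (fun p => aux12_syn_singleton_mem hC (hKC p) _)
    have hCmor : IsCMorphism C η := by
      refine ⟨hηsurj, ?_⟩
      intro F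
      rw [← Set.biUnion_preimage_singleton, Set.biUnion_eq_iUnion]
      exact aux12_iUnion hC.2.1 hC.2.2.2.1 _ (fun n => hsingle n)
    refine ⟨{ M := (MonoidHom.mrange η₀), φ := η }, hCmor, ?_⟩
    intro u v huv
    by_contra hnc
    have hsp := hKsep (α u, α v) hnc
    have hu : u ∈ K (α u, α v) := hsp.1 rfl
    have hv : v ∉ K (α u, α v) := by
      intro hv
      have : v ∈ K (α u, α v) ∩ α ⁻¹' {α v} := ⟨hv, rfl⟩
      rw [hsp.2] at this
      exact this
    have hη₀ : η₀ u = η₀ v := by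
      have : (η u : N₀) = (η v : N₀) := by rw [huv]
      exact this
    have hsyn : SynMorphism (K (α u, α v)) u = SynMorphism (K (α u, α v)) v :=
      congrFun hη₀ (α u, α v)
    exact hv ((aux12_mem_iff_of_synCon (aux12_synCon_of_eq hsyn)).mp hu)
end

section
/- Let C be a prevariety over a finite alphabet A and let α : A* → M be a monoid morphism into a finite monoid. If (s₁,t₁) and (s₂,t₂) are C-pairs for α, then (s₁s₂, t₁t₂) is a C-pair for α. -/
open Pointwise

open StarFreePaper

private lemma prevariety_iUnion {A : Type} {C : Set (Lang A)} (hC : IsPrevariety C)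
    {ι : Type} [Fintype ι] (f : ι → Lang A) (hf : ∀ i, f i ∈ C) : (⋃ i, f i) ∈ C := by
  classical
  have key : ∀ s : Finset ι, (⋃ i ∈ s, f i) ∈ C := by
    intro s
    induction s using Finset.induction_on with
    | empty => simpa using hC.2.1
    | insert _ _ hi ih =>
      rw [Finset.set_biUnion_insert]
      exact hC.2.2.2.1 _ (hf _) _ ih
  have h : (⋃ i, f i) = ⋃ i ∈ Finset.univ, f i := by simp
  rw [h]; exact key _

/-- `C`-pairs are closed under componentwise multiplication. -/
theorem statement13 {A : Type} [Fintype A] (C : Set (Lang A)) (hC : IsPrevariety C)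
    {M : Type} [Monoid M] [Finite M] (α : FreeMonoid A →* M)
    (s₁ t₁ s₂ t₂ : M) (h₁ : CPair C α s₁ t₁) (h₂ : CPair C α s₂ t₂) :
    CPair C α (s₁ * s₂) (t₁ * t₂) := by
  rintro ⟨K, hKC, hKsub, hKdisj⟩
  classical
  obtain ⟨r, F, hKF⟩ := hC.1 K hKC
  have hFin : Fintype r.M := Fintype.ofFinite r.M
  set β := r.φ with hβ
  -- For each word mapped to s₂, use h₁ to get a word mapped to t₁ gluing into K
  have step : ∀ u₂ : FreeMonoid A, α u₂ = s₂ → ∃ v, α v = t₁ ∧ v * u₂ ∈ K := by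
    intro u₂ hu₂
    by_contra hcon
    push_neg at hcon
    apply h₁
    refine ⟨RightQuot u₂ K, hC.2.2.2.2.2.2.2 K hKC u₂, ?_, ?_⟩
    · intro x hx
      have hx' : α x = s₁ := hx
      have : α (x * u₂) = s₁ * s₂ := by rw [map_mul, hx', hu₂]
      exact hKsub this
    · ext v
      simp only [Set.mem_inter_iff, Set.mem_empty_iff_false, iff_false, not_and]
      intro hv1 hv2
      exact hcon v hv2 hv1
  set P : r.M → Prop := fun n => ∃ u : FreeMonoid A, α u = s₂ ∧ β u = n with hP
  let f : r.M → Lang A := fun n =>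
    if h : P n then
      LeftQuot (Classical.choose (step (Classical.choose h) (Classical.choose_spec h).1)) K
    else ∅
  have hfC : ∀ n, f n ∈ C := by
    intro n
    by_cases h : P n
    · simp only [f, dif_pos h]
      exact hC.2.2.2.2.2.2.1 K hKC _
    · simp only [f, dif_neg h]
      exact hC.2.1
  apply h₂
  refine ⟨⋃ n, f n, prevariety_iUnion hC f hfC, ?_, ?_⟩
  · -- α⁻¹ {s₂} ⊆ ⋃ n, f n
    intro w hw
    have hw' : α w = s₂ := hw
    have hPn : P (β w) := ⟨w, hw', rfl⟩
    refine Set.mem_iUnion.mpr ⟨β w, ?_⟩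
    simp only [f, dif_pos hPn]
    set u := Classical.choose hPn with hu
    obtain ⟨hus, hub⟩ := Classical.choose_spec hPn
    set v := Classical.choose (step u hus) with hv
    obtain ⟨hvt, hvK⟩ := Classical.choose_spec (step u hus)
    have hKiff : ∀ x : FreeMonoid A, x ∈ K ↔ β x ∈ F := fun x => by
      conv_lhs => rw [hKF]
      rfl
    have hmem : β (v * u) ∈ F := (hKiff _).mp hvK
    show v * w ∈ K
    rw [hKiff]
    have : β (v * w) = β (v * u) := by
      rw [map_mul, map_mul, hub]
    rw [this]
    exact hmem
  · -- (⋃ n, f n) ∩ α⁻¹ {t₂} = ∅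
    ext w
    simp only [Set.mem_inter_iff, Set.mem_empty_iff_false, iff_false, not_and]
    rintro hw hwt
    have hwt' : α w = t₂ := hwt
    obtain ⟨n, hn⟩ := Set.mem_iUnion.mp hw
    by_cases h : P n
    · simp only [f, dif_pos h] at hn
      set u := Classical.choose h with hu
      have hus := (Classical.choose_spec h).1
      set v := Classical.choose (step u hus) with hv
      obtain ⟨hvt, hvK⟩ := Classical.choose_spec (step u hus)
      have : v * w ∈ K := hn
      have hmem : v * w ∈ K ∩ α ⁻¹' {t₁ * t₂} :=
        ⟨this, by show α (v * w) = t₁ * t₂; rw [map_mul, hvt, hwt']⟩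
      rw [hKdisj] at hmem
      exact hmem
    · simp only [f, dif_neg h] at hn
      exact hn
end

section
/- Let C be a prevariety over a finite alphabet A and let α : A* → M be a surjective monoid morphism into a finite monoid. For every idempotent e ∈ M, the C-orbit of e for α is closed under multiplication, contains e, and satisfies e·q = q·e = q for every q in the C-orbit of e; hence it is a monoid whose neutral element is e. -/
open Pointwise

open StarFreePaper


lemma sInter_mem_of_prevariety {A : Type} {C : Set (Lang A)} (hC : IsPrevariety C)
    {S : Set (Lang A)} (hS : S.Finite) (hmem : ∀ L ∈ S, L ∈ C) : ⋂₀ S ∈ C := by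
  revert hmem
  refine Set.Finite.induction_on (motive := fun S _ => (∀ L ∈ S, L ∈ C) → ⋂₀ S ∈ C) S hS (fun _ => by simpa using hC.2.2.1) ?_
  intro a s _ _ ih hmem
  rw [Set.sInter_insert]
  exact hC.2.2.2.2.1 a (hmem a (Set.mem_insert _ _)) _
    (ih fun L hL => hmem L (Set.mem_insert_of_mem _ hL))

lemma cpair_refl {A : Type} {C : Set (Lang A)}
    {M : Type} [Monoid M] (α : FreeMonoid A →* M)
    (hsurj : Function.Surjective α) (s : M) : CPair C α s s := by
  rintro ⟨K, _, hsub, hdisj⟩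
  obtain ⟨u, hu⟩ := hsurj s
  have : u ∈ K ∩ α ⁻¹' {s} := ⟨hsub (by simp [hu]), by simp [hu]⟩
  rw [hdisj] at this
  exact this

lemma cpair_mul {A : Type} {C : Set (Lang A)} (hC : IsPrevariety C)
    {M : Type} [Monoid M] (α : FreeMonoid A →* M)
    (hsurj : Function.Surjective α) {s1 t1 s2 t2 : M}
    (h1 : CPair C α s1 t1) (h2 : CPair C α s2 t2) :
    CPair C α (s1 * s2) (t1 * t2) := by
  rintro ⟨K, hK, hsub, hdisj⟩
  obtain ⟨r, F, hKF⟩ := hC.1 K hK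
  -- the set of left quotients of K by words mapping to s1
  set S : Set (Lang A) := {L | ∃ u : FreeMonoid A, α u = s1 ∧ L = LeftQuot u K} with hSdef
  have hquot : ∀ u : FreeMonoid A, LeftQuot u K = r.φ ⁻¹' {n | r.φ u * n ∈ F} := by
    intro u
    ext w
    simp [LeftQuot, hKF, Set.mem_preimage, map_mul]
  have hSfin : S.Finite := by
    apply Set.Finite.subset (Set.finite_range (fun m : r.M => r.φ ⁻¹' {n | m * n ∈ F}))
    rintro L ⟨u, hu, rfl⟩
    exact ⟨r.φ u, (hquot u).symm⟩
  have hSC : ∀ L ∈ S, L ∈ C := by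
    rintro L ⟨u, hu, rfl⟩
    exact hC.2.2.2.2.2.2.1 K hK u
  have hK2 : ⋂₀ S ∈ C := sInter_mem_of_prevariety hC hSfin hSC
  have hsub2 : α ⁻¹' {s2} ⊆ ⋂₀ S := by
    intro w hw
    rintro L ⟨u, hu, rfl⟩
    show u * w ∈ K
    exact hsub (by simp [Set.mem_preimage, map_mul, hu, Set.mem_singleton_iff.1 hw])
  have hne2 : ¬ (⋂₀ S ∩ α ⁻¹' {t2} = ∅) := fun hdj => h2 ⟨⋂₀ S, hK2, hsub2, hdj⟩
  obtain ⟨w2, hw2S, hw2t⟩ := Set.nonempty_iff_ne_empty.2 hne2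
  have hw2t : α w2 = t2 := hw2t
  have hK1 : RightQuot w2 K ∈ C := hC.2.2.2.2.2.2.2 K hK w2
  have hsub1 : α ⁻¹' {s1} ⊆ RightQuot w2 K := by
    intro u hu
    show u * w2 ∈ K
    exact hw2S (LeftQuot u K) ⟨u, Set.mem_singleton_iff.1 hu, rfl⟩
  have hne1 : ¬ (RightQuot w2 K ∩ α ⁻¹' {t1} = ∅) := fun hdj => h1 ⟨_, hK1, hsub1, hdj⟩
  obtain ⟨u1, hu1K, hu1t⟩ := Set.nonempty_iff_ne_empty.2 hne1
  have : u1 * w2 ∈ K ∩ α ⁻¹' {t1 * t2} := by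
    refine ⟨hu1K, ?_⟩
    simp [Set.mem_preimage, map_mul, Set.mem_singleton_iff.1 hu1t, hw2t]
  rw [hdisj] at this
  exact this

/-- For a prevariety `C`, a surjective morphism `α` into a finite monoid
and an idempotent `e`, the `C`-orbit of `e` is a monoid with neutral element `e`. -/
theorem statement14 {A : Type} [Fintype A] (C : Set (Lang A)) (hC : IsPrevariety C)
    {M : Type} [Monoid M] [Finite M] (α : FreeMonoid A →* M)
    (hsurj : Function.Surjective α) (e : M) (he : e * e = e) :
    (∀ q ∈ COrbit C α e, ∀ r ∈ COrbit C α e, q * r ∈ COrbit C α e) ∧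
      e ∈ COrbit C α e ∧
      ∀ q ∈ COrbit C α e, e * q = q ∧ q * e = q := by
  refine ⟨?_, ⟨e, cpair_refl α hsurj e, by rw [he, he]⟩, ?_⟩
  · rintro q ⟨s, hs, rfl⟩ r ⟨t, ht, rfl⟩
    refine ⟨s * e * t, ?_, ?_⟩
    · have := cpair_mul hC α hsurj (cpair_mul hC α hsurj hs (cpair_refl α hsurj e)) ht
      rwa [he, he] at this
    · simp only [mul_assoc]
      rw [← mul_assoc e e, he]
  · rintro q ⟨s, _, rfl⟩
    constructor
    · rw [← mul_assoc, ← mul_assoc, he]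
    · rw [mul_assoc, mul_assoc, he, ← mul_assoc]
end

section
/- Let G be a group prevariety over a finite alphabet A and let α : A* → M be a surjective monoid morphism into a finite monoid, with N ⊆ M the G-kernel of α. Then: (1) for every idempotent e ∈ M, the G-orbit of e for α is a subset of N; (2) N is exactly the G-orbit of the identity 1_M for α. -/
open Pointwise

open StarFreePaper


section Statement15Aux

variable {A : Type}

private lemma aux_biUnion_mem {G : Set (Lang A)} (h0 : (∅ : Lang A) ∈ G)
    (hU : ∀ K ∈ G, ∀ L ∈ G, K ∪ L ∈ G) {ι : Type} {f : ι → Lang A} {S : Set ι}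
    (hS : S.Finite) :
    (∀ i ∈ S, f i ∈ G) → (⋃ i ∈ S, f i) ∈ G := by
  refine Set.Finite.induction_on S hS (fun _ => by simpa using h0) ?_
  intro a s _ _ ih hf
  rw [Set.biUnion_insert]
  exact hU _ (hf a (Set.mem_insert _ _)) _ (ih fun i hi => hf i (Set.mem_insert_of_mem _ hi))

private lemma aux_iInter_mem {G : Set (Lang A)} (huniv : (Set.univ : Lang A) ∈ G)
    (hI : ∀ K ∈ G, ∀ L ∈ G, K ∩ L ∈ G) {ι : Type} [Finite ι] {f : ι → Lang A}
    (hf : ∀ i, f i ∈ G) : (⋂ i, f i) ∈ G := by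
  have key : ∀ S : Set ι, S.Finite → (⋂ i ∈ S, f i) ∈ G := by
    intro S hS
    refine Set.Finite.induction_on S hS (by simpa using huniv) ?_
    intro a s _ _ ih
    rw [Set.biInter_insert]
    exact hI _ (hf a) _ ih
  have := key Set.univ Set.finite_univ
  rwa [Set.biInter_univ] at this

private lemma aux_idem_pow {M : Type} [Monoid M] {e : M} (he : e * e = e) :
    ∀ k : ℕ, e ^ (k + 1) = e := by
  intro k
  induction k with
  | zero => simp
  | succ n ih => rw [pow_succ, ih, he]

/-- Key lemma: if `(e, s)` is a `G`-pair for `α` with `e` idempotent, then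
`e * s * e` belongs to the `G`-kernel of `α`. -/
private lemma aux_orbit_mem_kernel {A : Type} (G : Set (Lang A)) (hG : IsGroupPrevariety G)
    {M : Type} [Monoid M] (α : FreeMonoid A →* M)
    {e s : M} (he : e * e = e) (hp : CPair G α e s) : e * s * e ∈ GKernel G α := by
  classical
  obtain ⟨⟨-, h0, huniv, hU, hI, hC, hLQ, hRQ⟩, hGrp⟩ := hG
  rintro ⟨K, hKG, hKsub, hKdisj⟩
  have hε : (1 : FreeMonoid A) ∈ K := hKsub rfl
  obtain ⟨r, F, hKF⟩ := hGrp K hKG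
  set β := r.φ with hβ
  -- representatives for elements of the group
  set rep : r.G → FreeMonoid A := fun g => if h : ∃ w, β w = g then h.choose else 1 with hrepdef
  have hrep : ∀ g : r.G, (∃ w, β w = g) → β (rep g) = g := by
    intro g h
    simp only [hrepdef, dif_pos h]
    exact h.choose_spec
  -- membership in K is via β
  have hKmem : ∀ w : FreeMonoid A, w ∈ K ↔ β w ∈ F := by
    intro w; rw [hKF]; rfl
  -- quotient languages
  set Q : r.G × r.G → Lang A := fun p => LeftQuot (rep p.1) (RightQuot (rep p.2) K) with hQdef
  have hQmem : ∀ (p : r.G × r.G) (w : FreeMonoid A),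
      w ∈ Q p ↔ β (rep p.1) * β w * β (rep p.2) ∈ F := by
    intro p w
    show rep p.1 * w * rep p.2 ∈ K ↔ _
    rw [hKmem, map_mul, map_mul]
  set C : r.G → r.G × r.G → Lang A := fun h p =>
    if β (rep p.1) * h * β (rep p.2) ∈ F then Q p else (Q p)ᶜ with hCdef
  set Lh : r.G → Lang A := fun h => ⋂ p : r.G × r.G, C h p with hLhdef
  have hLhG : ∀ h : r.G, Lh h ∈ G := by
    intro h
    refine aux_iInter_mem huniv hI ?_
    intro p
    have hQG : Q p ∈ G := hLQ _ (hRQ K hKG (rep p.2)) (rep p.1)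
    by_cases hc : β (rep p.1) * h * β (rep p.2) ∈ F
    · simpa [hCdef, hc] using hQG
    · simpa [hCdef, hc] using hC _ hQG
  -- every word lies in the class of its image
  have hself : ∀ w : FreeMonoid A, w ∈ Lh (β w) := by
    intro w
    refine Set.mem_iInter.2 fun p => ?_
    by_cases hc : β (rep p.1) * β w * β (rep p.2) ∈ F
    · simpa [hCdef, hc] using (hQmem p w).2 hc
    · simp only [hCdef, if_neg hc]
      exact fun hw => hc ((hQmem p w).1 hw)
  -- words in `Lh h` behave like `h` under products with β-images
  have htest : ∀ (h : r.G) (v : FreeMonoid A), v ∈ Lh h →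
      ∀ g₁ g₂ : r.G, (∃ w, β w = g₁) → (∃ w, β w = g₂) →
        (g₁ * β v * g₂ ∈ F ↔ g₁ * h * g₂ ∈ F) := by
    intro h v hv g₁ g₂ h₁ h₂
    have hvp := Set.mem_iInter.1 hv (g₁, g₂)
    have e₁ : β (rep (g₁, g₂).1) = g₁ := hrep g₁ h₁
    have e₂ : β (rep (g₁, g₂).2) = g₂ := hrep g₂ h₂
    by_cases hc : g₁ * h * g₂ ∈ F
    · simp only [hCdef, e₁, e₂, if_pos hc] at hvp
      have := (hQmem (g₁, g₂) v).1 hvp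
      rw [e₁, e₂] at this
      exact ⟨fun _ => hc, fun _ => this⟩
    · simp only [hCdef, e₁, e₂, if_neg hc] at hvp
      have : ¬ g₁ * β v * g₂ ∈ F := by
        intro hmem
        exact hvp ((hQmem (g₁, g₂) v).2 (by rwa [e₁, e₂]))
      exact ⟨fun hx => absurd hx this, fun hx => absurd hx hc⟩
  -- the separator candidate
  set T : Set r.G := {h : r.G | ∃ u, α u = e ∧ β u = h} with hTdef
  set L : Lang A := ⋃ h ∈ T, Lh h with hLdef
  have hLG : L ∈ G := aux_biUnion_mem h0 hU (Set.toFinite T) fun h _ => hLhG h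
  have hLsub : α ⁻¹' {e} ⊆ L := by
    intro u hu
    exact Set.mem_biUnion ⟨u, hu, rfl⟩ (hself u)
  -- use the G-pair hypothesis
  have hnot : ¬ Separates L (α ⁻¹' {e}) (α ⁻¹' {s}) := fun hsep => hp ⟨L, hLG, hsep⟩
  have hne : ∃ v, v ∈ L ∧ α v = s := by
    by_contra hcon
    push_neg at hcon
    refine hnot ⟨hLsub, ?_⟩
    ext v
    simp only [Set.mem_inter_iff, Set.mem_preimage, Set.mem_singleton_iff, Set.mem_empty_iff_false,
      iff_false, not_and]
    exact fun hv => fun hvs => (hcon v hv) hvs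
  obtain ⟨v, hvL, hvs⟩ := hne
  obtain ⟨h, hhT, hvLh⟩ := Set.mem_iUnion₂.1 hvL
  obtain ⟨u, hue, hub⟩ := hhT
  -- build the witness word
  have hcard : 1 ≤ Nat.card r.G := Nat.card_pos
  set m : ℕ := 2 * Nat.card r.G with hmdef
  have hm2 : 2 ≤ m := by omega
  set w : FreeMonoid A := u ^ (m - 1) * v * u ^ m with hwdef
  have hαw : α w = e * s * e := by
    have h1 : α u ^ (m - 1) = e := by
      rw [hue, show m - 1 = m - 2 + 1 by omega]
      exact aux_idem_pow he (m - 2)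
    have h2 : α u ^ m = e := by
      rw [hue, show m = m - 1 + 1 by omega]
      exact aux_idem_pow he (m - 1)
    rw [hwdef, map_mul, map_mul, map_pow, map_pow, h1, h2, hvs]
  have hβw : β w = β u ^ (m - 1) * β v * β u ^ m := by
    rw [hwdef, map_mul, map_mul, map_pow, map_pow]
  have hwK : w ∈ K := by
    rw [hKmem, hβw]
    have := htest h v hvLh (β u ^ (m - 1)) (β u ^ m)
      ⟨u ^ (m - 1), map_pow β u (m - 1)⟩ ⟨u ^ m, map_pow β u m⟩
    rw [this]
    have : β u ^ (m - 1) * h * β u ^ m = 1 := by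
      rw [← hub, ← pow_succ, show m - 1 + 1 = m by omega, ← pow_add,
        show m + m = Nat.card r.G * 4 by omega, pow_mul, pow_card_eq_one', one_pow]
    rw [this]
    rw [hKmem] at hε
    simpa using hε
  have hmem : w ∈ K ∩ α ⁻¹' {e * s * e} := ⟨hwK, by simp [hαw]⟩
  rw [hKdisj] at hmem
  exact hmem

end Statement15Aux

/-- For a group prevariety `G` and a surjective morphism `α` into a
finite monoid with `G`-kernel `N`: every `G`-orbit is a subset of `N`, and `N` is the
`G`-orbit of the identity. -/
theorem statement15 {A : Type} [Fintype A] (G : Set (Lang A)) (hG : IsGroupPrevariety G)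
    {M : Type} [Monoid M] [Finite M] (α : FreeMonoid A →* M)
    (hsurj : Function.Surjective α) :
    (∀ e : M, e * e = e → COrbit G α e ⊆ GKernel G α) ∧
      GKernel G α = COrbit G α 1 := by
  have part1 : ∀ e : M, e * e = e → COrbit G α e ⊆ GKernel G α := by
    intro e he x hx
    obtain ⟨s, hpair, rfl⟩ := hx
    exact aux_orbit_mem_kernel G hG α he hpair
  refine ⟨part1, ?_⟩
  ext s
  constructor
  · intro hs
    refine ⟨s, ?_, by rw [one_mul, mul_one]⟩
    rintro ⟨K, hK, hsub, hdisj⟩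
    exact hs ⟨K, hK, Set.singleton_subset_iff.2 (hsub (by simp [Set.mem_preimage, map_one])),
      hdisj⟩
  · intro hx
    have := part1 1 (one_mul 1) hx
    exact this
end

section
/- Let A be a finite alphabet, let d ≥ 1 and let K ⊆ A⁺ be a prefix code with synchronization delay d. Then for every H ⊆ K, the language (K ∖ H)*·H is a prefix code with synchronization delay d+1. -/
open Pointwise

open StarFreePaper

namespace St16Aux

variable {A : Type}

lemma prefix_trim {α : Type*} {s t r : List α} (h : s <+: t ++ r) (hl : s.length ≤ t.length) :
    s <+: t := by
  rcases List.prefix_or_prefix_of_prefix h (List.prefix_append t r) with h1 | h2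
  · exact h1
  · have : t = s := h2.eq_of_length (le_antisymm h2.length_le hl)
    rw [this]

lemma Klist_prefix {K : Lang A} (hpc : IsPrefixCode K) :
    ∀ (l m : List (FreeMonoid A)), (∀ u ∈ l, u ∈ K) → (∀ u ∈ m, u ∈ K) →
      ∀ x : FreeMonoid A, l.prod * x = m.prod → l <+: m ∧ x = (m.drop l.length).prod := by
  intro l
  induction l with
  | nil =>
    intro m _ _ x hx
    simp only [List.prod_nil, one_mul] at hx
    exact ⟨List.nil_prefix, by simpa using hx⟩
  | cons a l ih =>
    intro m hl hm x hx
    cases m with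
    | nil =>
      exfalso
      simp only [List.prod_cons, List.prod_nil] at hx
      have hx' : a * (l.prod * x) = 1 := by rw [← mul_assoc]; exact hx
      have hlist := congrArg FreeMonoid.toList hx'
      rw [FreeMonoid.toList_mul, FreeMonoid.toList_one] at hlist
      have ha : FreeMonoid.toList a = [] := (List.append_eq_nil_iff.mp hlist).1
      have ha1 : a = 1 := FreeMonoid.toList.injective (by rw [ha]; rfl)
      exact hpc.1 (ha1 ▸ hl a (by simp))
    | cons b m' =>
      have key : a = b := by
        have hx' : a * (l.prod * x) = b * m'.prod := by
          simpa [List.prod_cons, mul_assoc] using hx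
        have hlist := congrArg FreeMonoid.toList hx'
        rw [FreeMonoid.toList_mul, FreeMonoid.toList_mul] at hlist
        rcases List.append_eq_append_iff.mp hlist with ⟨y, hy, _⟩ | ⟨y, hy, _⟩
        · by_cases hy0 : y = []
          · subst hy0
            exact (FreeMonoid.toList.injective (by simpa using hy)).symm
          · exfalso
            have hb : b = a * FreeMonoid.ofList y :=
              FreeMonoid.toList.injective (by simp [FreeMonoid.toList_mul, hy])
            have hne : FreeMonoid.ofList y ≠ 1 := fun h =>
              hy0 (by simpa using congrArg FreeMonoid.toList h)
            exact hpc.2 a (hl a (by simp)) (FreeMonoid.ofList y) hne (hb ▸ hm b (by simp))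
        · by_cases hy0 : y = []
          · subst hy0
            exact FreeMonoid.toList.injective (by simpa using hy)
          · exfalso
            have ha : a = b * FreeMonoid.ofList y :=
              FreeMonoid.toList.injective (by simp [FreeMonoid.toList_mul, hy])
            have hne : FreeMonoid.ofList y ≠ 1 := fun h =>
              hy0 (by simpa using congrArg FreeMonoid.toList h)
            exact hpc.2 b (hm b (by simp)) (FreeMonoid.ofList y) hne (ha ▸ hl a (by simp))
      subst key
      have hx2 : l.prod * x = m'.prod := by
        apply mul_left_cancel (a := a)
        simpa [List.prod_cons, mul_assoc] using hx
      obtain ⟨hpre, hdrop⟩ := ih m' (fun u hu => hl u (by simp [hu]))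
        (fun u hu => hm u (by simp [hu])) x hx2
      exact ⟨List.cons_prefix_cons.mpr ⟨rfl, hpre⟩, by simpa using hdrop⟩


/-- `b` is a block: words of `K∖H` followed by one word of `H`. -/
def IsBlock (K H : Lang A) (b : List (FreeMonoid A)) : Prop :=
  ∃ q g, (∀ u ∈ q, u ∈ K \ H) ∧ g ∈ H ∧ b = q ++ [g]

lemma block_prod_mem {K H : Lang A} {b : List (FreeMonoid A)} (hb : IsBlock K H b) :
    b.prod ∈ Lcat (Lstar (K \ H)) H := by
  obtain ⟨q, g, hq, hg, rfl⟩ := hb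
  exact ⟨q.prod, ⟨q, hq, rfl⟩, g, hg, by simp⟩

lemma mem_L_block {K H : Lang A} {z : FreeMonoid A}
    (hz : z ∈ Lcat (Lstar (K \ H)) H) : ∃ b, IsBlock K H b ∧ z = b.prod := by
  obtain ⟨p, ⟨q, hq, rfl⟩, g, hg, rfl⟩ := hz
  exact ⟨q ++ [g], ⟨q, g, hq, hg, rfl⟩, by simp⟩

lemma blocks_of_list {K H : Lang A} :
    ∀ zs : List (FreeMonoid A), (∀ z ∈ zs, z ∈ Lcat (Lstar (K \ H)) H) →
      ∃ bs : List (List (FreeMonoid A)), bs.length = zs.length ∧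
        (∀ b ∈ bs, IsBlock K H b) ∧ zs.prod = bs.flatten.prod := by
  intro zs
  induction zs with
  | nil => exact fun _ => ⟨[], rfl, by simp, by simp⟩
  | cons z zs ih =>
    intro hall
    obtain ⟨bs, hlen, hbs, hprod⟩ := ih (fun u hu => hall u (by simp [hu]))
    obtain ⟨b, hb, hzb⟩ := mem_L_block (hall z (by simp))
    refine ⟨b :: bs, by simp [hlen], ?_, by simp [List.prod_cons, hzb, hprod]⟩
    intro b' hb'
    rcases List.mem_cons.mp hb' with rfl | hb'
    · exact hb
    · exact hbs b' hb'

lemma Lplus_blocks {K H : Lang A} {w : FreeMonoid A}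
    (hw : w ∈ Lplus (Lcat (Lstar (K \ H)) H)) :
    ∃ bs : List (List (FreeMonoid A)), bs ≠ [] ∧ (∀ b ∈ bs, IsBlock K H b) ∧
      w = bs.flatten.prod := by
  obtain ⟨zs, hne, hall, rfl⟩ := hw
  obtain ⟨bs, hlen, hbs, hprod⟩ := blocks_of_list zs hall
  exact ⟨bs, fun h0 => hne (List.length_eq_zero_iff.mp (by simp [h0] at hlen; omega)), hbs, hprod⟩


lemma blocks_flatten_K {K H : Lang A} (hH : H ⊆ K) {bs : List (List (FreeMonoid A))}
    (hbs : ∀ b ∈ bs, IsBlock K H b) : ∀ u ∈ bs.flatten, u ∈ K := by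
  intro u hu
  obtain ⟨b, hb, hub⟩ := List.mem_flatten.mp hu
  obtain ⟨q, g, hq, hg, rfl⟩ := hbs b hb
  rcases List.mem_append.mp hub with h1 | h2
  · exact (hq u h1).1
  · rw [List.mem_singleton.mp h2]; exact hH hg

lemma blocks_flatten_ne {K H : Lang A} {bs : List (List (FreeMonoid A))}
    (hne : bs ≠ []) (hbs : ∀ b ∈ bs, IsBlock K H b) : bs.flatten ≠ [] := by
  cases bs with
  | nil => exact absurd rfl hne
  | cons b bs =>
    obtain ⟨q, g, _, _, rfl⟩ := hbs b (by simp)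
    simp

lemma LplusL_sub_LplusK {K H : Lang A} (hH : H ⊆ K) {w : FreeMonoid A}
    (hw : w ∈ Lplus (Lcat (Lstar (K \ H)) H)) : w ∈ Lplus K := by
  obtain ⟨bs, hne, hbs, rfl⟩ := Lplus_blocks hw
  exact ⟨bs.flatten, blocks_flatten_ne hne hbs, blocks_flatten_K hH hbs, rfl⟩

lemma block_cut {K H : Lang A} :
    ∀ (bs : List (List (FreeMonoid A))), (∀ b ∈ bs, IsBlock K H b) →
      ∀ (l' : List (FreeMonoid A)) (h : FreeMonoid A), h ∈ H →
        (l' ++ [h]) <+: bs.flatten →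
        (l' ++ [h]).prod ∈ Lplus (Lcat (Lstar (K \ H)) H) := by
  intro bs
  induction bs with
  | nil =>
    intro _ l' h _ hpre
    exact absurd (List.prefix_nil.mp hpre) (by simp)
  | cons b bs ih =>
    intro hbs l' h hH' hpre
    obtain ⟨q, g, hq, hg, rfl⟩ := hbs b (by simp)
    rw [List.flatten_cons] at hpre
    have hwhole : (l' ++ [h]) = q ++ [g] →
        (l' ++ [h]).prod ∈ Lplus (Lcat (Lstar (K \ H)) H) := by
      intro heq
      refine ⟨[(l' ++ [h]).prod], by simp, ?_, by simp⟩
      intro u hu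
      rw [List.mem_singleton.mp hu, heq]
      exact block_prod_mem ⟨q, g, hq, hg, rfl⟩
    rcases List.prefix_or_prefix_of_prefix hpre (List.prefix_append _ _) with h1 | h2
    · rcases eq_or_lt_of_le h1.length_le with heq | hlt
      · exact hwhole (h1.eq_of_length heq)
      · exfalso
        have hlen : (l' ++ [h]).length ≤ q.length := by
          simp only [List.length_append, List.length_singleton] at hlt ⊢; omega
        have hmem : h ∈ q := (prefix_trim h1 hlen).subset (by simp)
        exact (hq h hmem).2 hH'
    · obtain ⟨s, hs⟩ := h2
      have hspre : s <+: bs.flatten := by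
        rw [← hs] at hpre
        exact (List.prefix_append_right_inj _).mp hpre
      rcases List.eq_nil_or_concat s with rfl | ⟨s', c, rfl⟩
      · exact hwhole (by simpa using hs.symm)
      · simp only [List.concat_eq_append] at hspre hs
        have hs2 : ((q ++ [g]) ++ s') ++ [c] = l' ++ [h] := by
          rw [← hs]; simp
        obtain ⟨hs3, hch⟩ := List.append_inj' hs2 rfl
        have hch' : c = h := by simpa using hch
        subst hch'
        obtain ⟨zs, hzne, hzall, hzprod⟩ :=
          ih (fun b' hb' => hbs b' (by simp [hb'])) s' c hH' hspre
        refine ⟨(q ++ [g]).prod :: zs, by simp, ?_, ?_⟩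
        · intro u hu
          rcases List.mem_cons.mp hu with rfl | hu
          · exact block_prod_mem ⟨q, g, hq, hg, rfl⟩
          · exact hzall u hu
        · rw [List.prod_cons, ← hzprod, ← List.prod_append, hs]

lemma Klist_of_L {K H : Lang A} (hH : H ⊆ K) :
    ∀ zs : List (FreeMonoid A), (∀ z ∈ zs, z ∈ Lcat (Lstar (K \ H)) H) →
      ∃ m : List (FreeMonoid A), (∀ u ∈ m, u ∈ K) ∧ zs.prod = m.prod ∧
        zs.length ≤ m.length := by
  intro zs hall
  obtain ⟨bs, hlen, hbs, hprod⟩ := blocks_of_list zs hall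
  refine ⟨bs.flatten, blocks_flatten_K hH hbs, hprod, ?_⟩
  rw [← hlen]
  calc bs.length = (bs.map (fun _ => 1)).sum := by simp
    _ ≤ (bs.map List.length).sum := by
        apply List.sum_le_sum
        intro b hb
        obtain ⟨q, g, _, _, rfl⟩ := hbs b hb
        simp
    _ = bs.flatten.length := (List.length_flatten).symm

lemma sync_ext {K : Lang A} {d : ℕ} (hsd : HasSyncDelay K d) :
    ∀ e, d ≤ e → ∀ u v w : FreeMonoid A, u * v * w ∈ Lplus K → v ∈ Lpow K e →
      u * v ∈ Lplus K := by
  intro e hde u v w huvw hv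
  obtain ⟨n, hlen, hall, rfl⟩ := hv
  have hsplit : n.prod = (n.take (e - d)).prod * (n.drop (e - d)).prod := by
    rw [← List.prod_append, List.take_append_drop]
  have h2 : (n.drop (e - d)).prod ∈ Lpow K d :=
    ⟨n.drop (e - d), by rw [List.length_drop, hlen]; omega,
      fun u hu => hall u (List.drop_subset _ _ hu), rfl⟩
  have h3 : (u * (n.take (e - d)).prod) * (n.drop (e - d)).prod * w ∈ Lplus K := by
    rw [mul_assoc u, ← hsplit]; exact huvw
  have := hsd _ _ _ h3 h2
  rw [mul_assoc u, ← hsplit] at this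
  exact this

end St16Aux

/-- If `K` is a prefix code with synchronization delay `d` and `H ⊆ K`,
then `(K ∖ H)* H` is a prefix code with synchronization delay `d + 1`. -/
theorem statement16 {A : Type} [Fintype A] (d : ℕ) (hd : 1 ≤ d) (K : Lang A)
    (hpc : IsPrefixCode K) (hsd : HasSyncDelay K d) (H : Lang A) (hH : H ⊆ K) :
    IsPrefixCode (Lcat (Lstar (K \ H)) H) ∧
      HasSyncDelay (Lcat (Lstar (K \ H)) H) (d + 1) := by
  constructor
  · constructor
    · rintro ⟨p, hp, h, hh, heq⟩
      have hlist := congrArg FreeMonoid.toList heq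
      rw [FreeMonoid.toList_mul, FreeMonoid.toList_one] at hlist
      have hh1 : FreeMonoid.toList h = [] := (List.append_eq_nil_iff.mp hlist.symm).2
      have : h = 1 := FreeMonoid.toList.injective (by rw [hh1]; rfl)
      exact hpc.1 (hH (this ▸ hh))
    · rintro u ⟨p, ⟨q, hq, rfl⟩, h, hh, rfl⟩ x hx ⟨p', ⟨q', hq', rfl⟩, h', hh', heq⟩
      have hKsub : ∀ u ∈ q ++ [h], u ∈ K := by
        intro u hu
        rcases List.mem_append.mp hu with h1 | h2
        · exact (hq u h1).1
        · rw [List.mem_singleton.mp h2]; exact hH hh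
      have hKsub' : ∀ u ∈ q' ++ [h'], u ∈ K := by
        intro u hu
        rcases List.mem_append.mp hu with h1 | h2
        · exact (hq' u h1).1
        · rw [List.mem_singleton.mp h2]; exact hH hh'
      have hprod : (q ++ [h]).prod * x = (q' ++ [h']).prod := by
        simpa using heq
      obtain ⟨hpre, hx2⟩ := St16Aux.Klist_prefix hpc _ _ hKsub hKsub' x hprod
      have hdropne : (q' ++ [h']).drop (q ++ [h]).length ≠ [] := by
        intro h0
        rw [h0] at hx2
        exact hx (by simpa using hx2)
      have hlt : (q ++ [h]).length < (q' ++ [h']).length := by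
        by_contra hle
        push_neg at hle
        exact hdropne (List.drop_eq_nil_of_le hle)
      have hlen : (q ++ [h]).length ≤ q'.length := by
        simp only [List.length_append, List.length_singleton] at hlt ⊢; omega
      have hmem : h ∈ q' := (St16Aux.prefix_trim hpre hlen).subset (by simp)
      exact (hq' h hmem).2 hh
  · intro u v w huvw hv
    obtain ⟨zs, hzlen, hzall, rfl⟩ := hv
    have hzs_ne : zs ≠ [] := by
      intro h0; rw [h0] at hzlen; simp at hzlen
    obtain ⟨zs', z, rfl⟩ : ∃ zs' z, zs = zs' ++ [z] := by
      rcases List.eq_nil_or_concat zs with h0 | ⟨zs', z, hz⟩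
      · exact absurd h0 hzs_ne
      · exact ⟨zs', z, by simpa using hz⟩
    obtain ⟨ql, g, hql, hg, hzval⟩ :
        ∃ ql : List (FreeMonoid A), ∃ g : FreeMonoid A,
          (∀ u ∈ ql, u ∈ K \ H) ∧ g ∈ H ∧ z = ql.prod * g := by
      obtain ⟨p, ⟨ql, hql, rfl⟩, g, hg, hz⟩ := hzall z (by simp)
      exact ⟨ql, g, hql, hg, hz⟩
    obtain ⟨m, hmK, hmprod, hmlen⟩ :=
      St16Aux.Klist_of_L hH zs' (fun z' hz' => hzall z' (by simp [hz']))
    have hzslen : zs'.length = d := by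
      simpa using hzlen
    -- u * v * w ∈ K⁺
    have huvwK : u * (zs' ++ [z]).prod * w ∈ Lplus K :=
      St16Aux.LplusL_sub_LplusK hH huvw
    -- key product identity : v = (m ++ ql).prod * g
    have hveq : (zs' ++ [z]).prod = (m ++ ql).prod * g := by
      rw [List.prod_append, List.prod_append, List.prod_singleton, hzval, hmprod,
        mul_assoc]
    have hmqlK : ∀ x ∈ m ++ ql, x ∈ K := by
      intro x hx
      rcases List.mem_append.mp hx with h1 | h2
      · exact hmK x h1
      · exact (hql x h2).1
    have huv' : u * (m ++ ql).prod ∈ Lplus K := by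
      apply St16Aux.sync_ext hsd (m ++ ql).length
        (by rw [List.length_append]; omega) u _ (g * w)
      · rw [← mul_assoc, mul_assoc u, ← hveq]
        exact huvwK
      · exact ⟨m ++ ql, rfl, hmqlK, rfl⟩
    obtain ⟨l0, hl0ne, hl0K, hl0prod⟩ := huv'
    -- uv = (l0 ++ [g]).prod
    have huveq : u * (zs' ++ [z]).prod = (l0 ++ [g]).prod := by
      rw [hveq, ← mul_assoc, hl0prod, List.prod_append, List.prod_singleton]
    -- blocks of uvw
    obtain ⟨bs, hbsne, hbs, hbsprod⟩ := St16Aux.Lplus_blocks huvw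
    have hKl0g : ∀ x ∈ l0 ++ [g], x ∈ K := by
      intro x hx
      rcases List.mem_append.mp hx with h1 | h2
      · exact hl0K x h1
      · rw [List.mem_singleton.mp h2]; exact hH hg
    have hprefix : (l0 ++ [g]) <+: bs.flatten := by
      refine (St16Aux.Klist_prefix hpc (l0 ++ [g]) bs.flatten hKl0g
        (St16Aux.blocks_flatten_K hH hbs) w ?_).1
      rw [← huveq]
      exact hbsprod.symm ▸ rfl
    have := St16Aux.block_cut bs hbs l0 g hg hprefix
    rw [← huveq] at this
    exact this
end
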